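/- arXiv:2406.09868 — 6 statements merged into one kernel-verified Lean document; each statement's English description precedes it below -/
import Mathlib

section
/- Let s be a sequence in L_P for a monic polynomial P of degree m, and suppose the Hankel matrix H_s = (s_{i+j})_{0 ≤ i,j ≤ m-1} is invertible. Then for every sequence v ∈ L_P there exist unique rational coefficients α₀, ..., α_{m-1} with v = Σ_{i=0}^{m-1} αᵢ σⁱ s; equivalently, the shifted sequences σⁱ s for 0 ≤ i ≤ m-1 form a basis of L_P, and (α₀,...,α_{m-1})ᵀ = H_s⁻¹ V_v. -/
/-- The space `L_P` of rational sequences satisfying the linear recurrence given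
by the monic polynomial `P = Xᵐ - Σ_{i<m} αᵢ Xⁱ`. -/
def LP (m : ℕ) (α : Fin m → ℚ) : Submodule ℚ (ℕ → ℚ) where
  carrier := { s | ∀ n, s (n + m) = ∑ i : Fin m, α i * s (n + (i : ℕ)) }
  add_mem' := by
    intro a b ha hb n
    simp only [Pi.add_apply, ha n, hb n, mul_add, Finset.sum_add_distrib]
  zero_mem' := by intro n; simp
  smul_mem' := by
    intro c a ha n
    simp only [Pi.smul_apply, smul_eq_mul, ha n, Finset.mul_sum]
    exact Finset.sum_congr rfl fun i _ => by ring

/-- The Hankel matrix `H_s = (s_{i+j})_{0 ≤ i,j < m}` of a sequence `s`. -/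
def hankel (m : ℕ) (s : ℕ → ℚ) : Matrix (Fin m) (Fin m) ℚ :=
  fun i j => s ((i : ℕ) + (j : ℕ))

/-!
An element of `L_P` is determined by its first `m` terms, and `L_P` is stable under the shift,
so `Σ cᵢ σⁱ s ∈ L_P`. The first `m` terms of `Σ cᵢ σⁱ s` form the vector `H_s c`; hence
`v = Σ cᵢ σⁱ s` holds exactly when `H_s c = V_v`, which has the unique solution `c = H_s⁻¹ V_v`.
-/

open Matrix

theorem Matrix.mulVec_eq_iff_eq_inv_mulVec {n R : Type*} [Fintype n] [DecidableEq n] [CommRing R]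
    {A : Matrix n n R} (hA : IsUnit A) {c b : n → R} : A *ᵥ c = b ↔ c = A⁻¹ *ᵥ b := by
  have hdet : IsUnit A.det := (isUnit_iff_isUnit_det A).mp hA
  constructor
  · rintro rfl
    rw [mulVec_mulVec, nonsing_inv_mul A hdet, one_mulVec]
  · rintro rfl
    rw [mulVec_mulVec, mul_nonsing_inv A hdet, one_mulVec]

namespace LP

variable {m : ℕ} {α : Fin m → ℚ}

theorem eq_of_forall_fin_eq {v w : ℕ → ℚ} (hv : v ∈ LP m α) (hw : w ∈ LP m α)
    (h : ∀ k : Fin m, v k = w k) : v = w := by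
  funext n
  induction n using Nat.strong_induction_on with
  | _ n ih =>
    rcases lt_or_ge n m with hn | hn
    · exact h ⟨n, hn⟩
    · obtain ⟨k, rfl⟩ := Nat.exists_eq_add_of_le' hn
      rw [hv k, hw k]
      exact Finset.sum_congr rfl fun i _ => by rw [ih (k + i) (by omega)]

theorem shift_mem {s : ℕ → ℚ} (hs : s ∈ LP m α) (k : ℕ) : (fun n => s (n + k)) ∈ LP m α := by
  intro n
  simp only [add_right_comm n _ k]
  exact hs (n + k)

end LP

def shiftComb {m : ℕ} (s : ℕ → ℚ) (c : Fin m → ℚ) : ℕ → ℚ :=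
  fun n => ∑ i : Fin m, c i * s (n + i)

theorem shiftComb_eq_sum_smul {m : ℕ} (s : ℕ → ℚ) (c : Fin m → ℚ) :
    shiftComb s c = ∑ i : Fin m, c i • fun n => s (n + i) := by
  funext n
  simp [shiftComb, Finset.sum_apply]

theorem shiftComb_mem {m : ℕ} {α : Fin m → ℚ} {s : ℕ → ℚ} (hs : s ∈ LP m α) (c : Fin m → ℚ) :
    shiftComb s c ∈ LP m α := by
  rw [shiftComb_eq_sum_smul]
  exact Submodule.sum_mem _ fun i _ => Submodule.smul_mem _ _ (LP.shift_mem hs i)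

theorem shiftComb_fin_eq_hankel_mulVec {m : ℕ} (s : ℕ → ℚ) (c : Fin m → ℚ) (k : Fin m) :
    shiftComb s c k = (hankel m s *ᵥ c) k := by
  simp only [shiftComb, mulVec, dotProduct, hankel, mul_comm]

theorem shiftComb_eq_iff_hankel_mulVec_eq {m : ℕ} {α : Fin m → ℚ} {s v : ℕ → ℚ}
    (hs : s ∈ LP m α) (hv : v ∈ LP m α) (c : Fin m → ℚ) :
    v = shiftComb s c ↔ hankel m s *ᵥ c = fun k : Fin m => v k := by
  constructor
  · rintro rfl
    funext k
    exact (shiftComb_fin_eq_hankel_mulVec s c k).symm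
  · intro h
    refine LP.eq_of_forall_fin_eq hv (shiftComb_mem hs c) fun k => ?_
    rw [shiftComb_fin_eq_hankel_mulVec, h]

/-- if `s ∈ L_P` has invertible Hankel matrix, then every `v ∈ L_P`
is a unique rational linear combination `v = Σ_{i<m} αᵢ σⁱ s` of the shifted
sequences `σⁱ s` (so these form a basis of `L_P`), with coefficient vector
`H_s⁻¹ V_v`. -/
theorem hankel_shifted_basis (m : ℕ) (α : Fin m → ℚ) (s : ℕ → ℚ)
    (hs : s ∈ LP m α) (hH : IsUnit (hankel m s)) (v : ℕ → ℚ) (hv : v ∈ LP m α) :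
    (∃! c : Fin m → ℚ, v = fun n => ∑ i : Fin m, c i * s (n + (i : ℕ))) ∧
    v = fun n => ∑ i : Fin m,
      ((hankel m s)⁻¹.mulVec (fun j : Fin m => v (j : ℕ))) i * s (n + (i : ℕ)) := by
  have hsolve : ∀ c, v = shiftComb s c ↔ c = (hankel m s)⁻¹ *ᵥ fun j : Fin m => v j := fun c =>
    (shiftComb_eq_iff_hankel_mulVec_eq hs hv c).trans (mulVec_eq_iff_eq_inv_mulVec hH)
  have hrep := (hsolve _).mpr rfl
  exact ⟨⟨_, hrep, fun c hc => (hsolve c).mp hc⟩, hrep⟩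
end

section
/- Let θ = θ₁ > 1 > |θ₂| ≥ ... ≥ |θₙ| > 0 be the distinct roots of a polynomial P, let s be a sequence with σᵏ s ∈ L_P, write s_{m+k} = Σ_{i=1}^n γᵢ θᵢᵐ for all m, and let C > 0. Define π_s(a_M⋯a₀) = Σ_{i=0}^{M} aᵢ sᵢ and π_θ(a_M⋯a₀) = γ₁ Σ_{i=k}^{M} aᵢ θ^{i-k}. Then for every finite word a_M⋯a₀ with all |aᵢ| ≤ C, |π_s(a_M⋯a₀) - π_θ(a_M⋯a₀)| ≤ C(Σ_{i=0}^{k-1}|sᵢ| + Σ_{j=2}^{n} |γⱼ|/(1-|θⱼ|)). -/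
open Finset

private lemma geom_aux {r : ℝ} (h0 : 0 ≤ r) (h1 : r < 1) (N : ℕ) :
    ∑ i ∈ range N, r ^ i ≤ 1 / (1 - r) := by
  rw [geom_sum_eq (by linarith)]
  have hne : r - 1 ≠ 0 := by linarith
  have hne2 : (1:ℝ) - r ≠ 0 := by linarith
  have heq : (r ^ N - 1) / (r - 1) = (1 - r ^ N) / (1 - r) := by
    field_simp
    ring
  rw [heq, div_le_div_iff₀ (by linarith) (by linarith)]
  have h2 : 0 ≤ r ^ N := pow_nonneg h0 N
  nlinarith [mul_nonneg h2 (by linarith : (0:ℝ) ≤ 1 - r)]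

open Finset in
/-- approximation of the weight `π_s` of a word of bounded digits
by the weight `π_θ` computed from the dominant root `θ = θ₁` of a Pisot-like
polynomial, with error at most
`C (Σ_{i<k} |sᵢ| + Σ_{j≥2} |γⱼ|/(1-|θⱼ|))`. -/
theorem pi_s_pi_theta_bound (n k : ℕ) (θ γ : Fin (n + 1) → ℂ)
    (hdist : Function.Injective θ)
    (hθ1_real : (θ 0).im = 0) (hθ1_gt : 1 < (θ 0).re)
    (hθ_small : ∀ j : Fin (n + 1), j ≠ 0 → 0 < ‖θ j‖ ∧ ‖θ j‖ < 1)
    (hγ1_real : (γ 0).im = 0)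
    (s : ℕ → ℝ)
    (hdecomp : ∀ m : ℕ, (s (m + k) : ℂ) = ∑ i : Fin (n + 1), γ i * θ i ^ m)
    (C : ℝ) (hC : 0 < C) (M : ℕ) (a : ℕ → ℤ) (ha : ∀ i ≤ M, |(a i : ℝ)| ≤ C) :
    |(∑ i ∈ range (M + 1), (a i : ℝ) * s i) -
        (γ 0).re * ∑ i ∈ Finset.Ico k (M + 1), (a i : ℝ) * (θ 0).re ^ (i - k)| ≤
      C * ((∑ i ∈ range k, |s i|) +
        ∑ j ∈ Finset.univ.erase (0 : Fin (n + 1)),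
          ‖γ j‖ / (1 - ‖θ j‖)) := by
  set t : ℝ := (θ 0).re with ht
  set g : ℝ := (γ 0).re with hg
  have hθ0 : θ 0 = (t : ℂ) := by
    apply Complex.ext
    · simp [ht]
    · simp [hθ1_real]
  have hγ0 : γ 0 = (g : ℂ) := by
    apply Complex.ext
    · simp [hg]
    · simp [hγ1_real]
  -- pointwise bound
  have key : ∀ m : ℕ, |s (m + k) - g * t ^ m| ≤
      ∑ j ∈ univ.erase (0 : Fin (n+1)), ‖γ j‖ * ‖θ j‖ ^ m := by
    intro m
    have h1 : (s (m+k) : ℂ) = γ 0 * θ 0 ^ m +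
        ∑ j ∈ univ.erase (0 : Fin (n+1)), γ j * θ j ^ m := by
      rw [hdecomp m, ← Finset.add_sum_erase _ _ (mem_univ 0)]
    have h2 : s (m+k) - g * t ^ m =
        (∑ j ∈ univ.erase (0 : Fin (n+1)), γ j * θ j ^ m).re := by
      have h3 := congrArg Complex.re h1
      rw [hθ0, hγ0, ← Complex.ofReal_pow, ← Complex.ofReal_mul] at h3
      simp only [Complex.add_re, Complex.ofReal_re] at h3
      linarith
    rw [h2]
    calc |(∑ j ∈ univ.erase (0 : Fin (n+1)), γ j * θ j ^ m).re|
        ≤ ‖∑ j ∈ univ.erase (0 : Fin (n+1)), γ j * θ j ^ m‖ :=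
          Complex.abs_re_le_norm _
      _ ≤ ∑ j ∈ univ.erase (0 : Fin (n+1)), ‖γ j * θ j ^ m‖ :=
          norm_sum_le _ _
      _ = ∑ j ∈ univ.erase (0 : Fin (n+1)), ‖γ j‖ * ‖θ j‖ ^ m := by
          simp [map_mul, map_pow]
  -- split the sum
  have hs : ∑ i ∈ range (M+1), (a i : ℝ) * s i =
      (∑ i ∈ range (min k (M+1)), (a i : ℝ) * s i) +
        ∑ i ∈ Finset.Ico k (M+1), (a i : ℝ) * s i := by
    rcases le_total k (M+1) with h | h
    · rw [min_eq_left h, range_eq_Ico, range_eq_Ico]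
      exact (Finset.sum_Ico_consecutive _ (Nat.zero_le k) h).symm
    · rw [min_eq_right h, Finset.Ico_eq_empty (by omega), sum_empty, add_zero]
  have hB : (∑ i ∈ Finset.Ico k (M+1), (a i : ℝ) * s i) -
      g * ∑ i ∈ Finset.Ico k (M+1), (a i : ℝ) * t ^ (i - k) =
      ∑ i ∈ Finset.Ico k (M+1), (a i : ℝ) * (s i - g * t ^ (i - k)) := by
    rw [Finset.mul_sum, ← Finset.sum_sub_distrib]
    apply Finset.sum_congr rfl
    intro i _
    ring
  rw [hs, hg]
  have habs : |(∑ i ∈ range (min k (M+1)), (a i : ℝ) * s i) +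
      (∑ i ∈ Finset.Ico k (M+1), (a i : ℝ) * s i) -
      g * ∑ i ∈ Finset.Ico k (M+1), (a i : ℝ) * t ^ (i - k)| ≤
      |∑ i ∈ range (min k (M+1)), (a i : ℝ) * s i| +
      |∑ i ∈ Finset.Ico k (M+1), (a i : ℝ) * (s i - g * t ^ (i - k))| := by
    rw [add_sub_assoc, hB]
    exact abs_add_le _ _
  refine habs.trans ?_
  rw [mul_add]
  gcongr
  · -- first part
    calc |∑ i ∈ range (min k (M+1)), (a i : ℝ) * s i|
        ≤ ∑ i ∈ range (min k (M+1)), |(a i : ℝ) * s i| :=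
          Finset.abs_sum_le_sum_abs _ _
      _ ≤ ∑ i ∈ range (min k (M+1)), C * |s i| := by
          apply Finset.sum_le_sum
          intro i hi
          rw [abs_mul]
          exact mul_le_mul_of_nonneg_right
            (ha i (by simp at hi; omega)) (abs_nonneg _)
      _ ≤ ∑ i ∈ range k, C * |s i| := by
          apply Finset.sum_le_sum_of_subset_of_nonneg
          · exact Finset.range_subset_range.2 (min_le_left _ _)
          · intro i _ _
            positivity
      _ = C * ∑ i ∈ range k, |s i| := by rw [Finset.mul_sum]
  · -- second part
    calc |∑ i ∈ Finset.Ico k (M+1), (a i : ℝ) * (s i - g * t ^ (i - k))|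
        ≤ ∑ i ∈ Finset.Ico k (M+1), |(a i : ℝ)| * |s i - g * t ^ (i - k)| := by
          refine (Finset.abs_sum_le_sum_abs _ _).trans ?_
          simp [abs_mul, le_refl]
      _ ≤ ∑ i ∈ Finset.Ico k (M+1),
            C * ∑ j ∈ univ.erase (0 : Fin (n+1)),
              ‖γ j‖ * ‖θ j‖ ^ (i - k) := by
          apply Finset.sum_le_sum
          intro i hi
          simp only [Finset.mem_Ico] at hi
          have hik : i - k + k = i := by omega
          have := key (i - k)
          rw [hik] at this
          exact mul_le_mul (ha i (by omega)) this (abs_nonneg _) hC.le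
      _ = C * ∑ j ∈ univ.erase (0 : Fin (n+1)),
            ‖γ j‖ * ∑ i ∈ Finset.Ico k (M+1), ‖θ j‖ ^ (i - k) := by
          rw [← Finset.mul_sum, Finset.sum_comm]
          congr 1
          apply Finset.sum_congr rfl
          intro j _
          rw [Finset.mul_sum]
      _ ≤ C * ∑ j ∈ univ.erase (0 : Fin (n+1)),
            ‖γ j‖ / (1 - ‖θ j‖) := by
          apply mul_le_mul_of_nonneg_left _ hC.le
          apply Finset.sum_le_sum
          intro j hj
          have hj0 : j ≠ 0 := (Finset.mem_erase.1 hj).1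
          obtain ⟨h0, h1⟩ := hθ_small j hj0
          have hIco : ∑ i ∈ Finset.Ico k (M+1), ‖θ j‖ ^ (i - k) ≤
              1 / (1 - ‖θ j‖) := by
            rw [Finset.sum_Ico_eq_sum_range]
            calc ∑ i ∈ range (M + 1 - k), ‖θ j‖ ^ (k + i - k)
                = ∑ i ∈ range (M + 1 - k), ‖θ j‖ ^ i := by
                  apply Finset.sum_congr rfl; intro i _; congr 1; omega
              _ ≤ 1 / (1 - ‖θ j‖) := geom_aux h0.le h1 _
          calc ‖γ j‖ * ∑ i ∈ Finset.Ico k (M+1), ‖θ j‖ ^ (i - k)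
              ≤ ‖γ j‖ * (1 / (1 - ‖θ j‖)) :=
                mul_le_mul_of_nonneg_left hIco (norm_nonneg _)
            _ = ‖γ j‖ / (1 - ‖θ j‖) := by ring
end

section
/- The language of a linear recurrence sequence automaton whose recurrence polynomial is ultimately Pisot is regular. -/
/-- The shift operator on integer sequences: `(shift s) n = s (n+1)`. -/
def shift (s : ℕ → ℤ) : ℕ → ℤ := fun n => s (n + 1)

/-- A sequence automaton: a partial deterministic automaton equipped with a
partial vector map `π` sharing its domain with the transition map `δ`. -/
structure SeqAut (Q A : Type*) where
  δ : Q → A → Option Q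
  π : Q → A → Option (ℕ → ℤ)
  q0 : Q
  F : Set Q
  dom : ∀ q a, (δ q a).isSome ↔ (π q a).isSome

variable {Q A : Type*}

/-- One step of the simultaneous extension of `δ` and `π` to words. -/
def SeqAut.step (M : SeqAut Q A) : Option (Q × (ℕ → ℤ)) → A → Option (Q × (ℕ → ℤ))
  | none, _ => none
  | some (q, s), a => (M.δ q a).bind fun q' => (M.π q a).map fun w => (q', shift s + w)

/-- The extension of `δ` and `π` to words: `M.run q u = some (δ(q,u), π(q,u))`
when defined, `none` otherwise. -/
def SeqAut.run (M : SeqAut Q A) (q : Q) (u : List A) : Option (Q × (ℕ → ℤ)) :=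
  u.foldl M.step (some (q, 0))

/-- The language of a sequence automaton: words accepted with weight 0. -/
def SeqAut.L0 (M : SeqAut Q A) : Language A :=
  { u | ∃ (q : Q) (s : ℕ → ℤ), M.run M.q0 u = some (q, s) ∧ q ∈ M.F ∧ s 0 = 0 }

/-- `P` is the minimal polynomial of a Pisot number: a monic irreducible integer
polynomial with a real root `θ > 1`, all of whose other complex roots have
modulus strictly between `0` and `1`. -/
def IsPisotPoly (P : Polynomial ℤ) : Prop :=
  P.Monic ∧ Irreducible P ∧ ∃ θ : ℝ, 1 < θ ∧ Polynomial.aeval θ P = 0 ∧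
    ∀ z : ℂ, Polynomial.aeval z P = 0 → z ≠ (θ : ℂ) →
      0 < ‖z‖ ∧ ‖z‖ < 1

/-- A sequence satisfies the linear recurrence given by a polynomial `R`:
`Σ_i R.coeff i · s (n+i) = 0` for all `n`. -/
def SatisfiesRec (R : Polynomial ℤ) (s : ℕ → ℤ) : Prop :=
  ∀ n : ℕ, ∑ i ∈ Finset.range (R.natDegree + 1), R.coeff i * s (n + i) = 0

/-- A polynomial is ultimately Pisot if it is `Xᵏ P(X)` for some `k` and some
minimal polynomial `P` of a Pisot number. -/
def UltimatelyPisotPoly (R : Polynomial ℤ) : Prop :=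
  ∃ (k : ℕ) (P : Polynomial ℤ), IsPisotPoly P ∧ R = Polynomial.X ^ k * P

/-- Myhill–Nerode-lite: if a finite-range function refines the Nerode congruence,
the language is regular. -/
theorem regular_of_encode {L : Language A} {T : Type*} [Fintype T] (e : List A → T)
    (he : ∀ u v, e u = e v → ∀ t, (u ++ t ∈ L ↔ v ++ t ∈ L)) : L.IsRegular := by
  classical
  set β : List A → Language A := fun u => {t | u ++ t ∈ L} with hβ
  have hfac : ∀ u v, e u = e v → β u = β v := by
    intro u v h
    ext t; exact he u v h t
  have hfin : (Set.range β).Finite := by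
    set G : T → Language A := fun x => if h : ∃ u, e u = x then β h.choose else (0 : Language A) with hG
    have : Set.range β ⊆ Set.range G := by
      rintro l ⟨u, rfl⟩
      refine ⟨e u, ?_⟩
      have h : ∃ v, e v = e u := ⟨u, rfl⟩
      simp only [hG, dif_pos h]
      exact hfac _ _ h.choose_spec
    exact (Set.finite_range G).subset this
  haveI : Fintype ↥(Set.range β) := hfin.fintype
  set dfa : DFA A ↥(Set.range β) :=
      { step := fun s a => ⟨{t | a :: t ∈ s.1}, by
          obtain ⟨u, hu⟩ := s.2
          refine ⟨u ++ [a], ?_⟩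
          ext t
          simp only [hβ, ← hu, Set.mem_setOf_eq, List.append_assoc, List.singleton_append]
          exact Iff.rfl
        ⟩
        start := ⟨β [], ⟨[], rfl⟩⟩
        accept := {s | [] ∈ s.1} } with hdfa
  have hacc : dfa.accepts = L := by
    have heval : ∀ u : List A, dfa.eval u = ⟨β u, ⟨u, rfl⟩⟩ := by
      intro u
      induction u using List.reverseRecOn with
      | nil => rfl
      | append_singleton u a ih =>
        rw [DFA.eval, DFA.evalFrom_append_singleton, ← DFA.eval, ih]
        apply Subtype.ext
        ext t
        simp only [hβ, Set.mem_setOf_eq, List.append_assoc, List.singleton_append]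
        exact Iff.rfl
    ext u
    rw [DFA.mem_accepts]
    show dfa.eval u ∈ {s : ↥(Set.range β) | [] ∈ s.1} ↔ _
    rw [heval]
    show u ++ [] ∈ L ↔ u ∈ L
    rw [List.append_nil]
  exact ⟨Fin (Fintype.card ↥(Set.range β)), inferInstance,
    DFA.reindex (Fintype.equivFin _) dfa, by rw [DFA.accepts_reindex, hacc]⟩

namespace SeqAut

lemma run_def (M : SeqAut Q A) (q : Q) (u : List A) :
    M.run q u = u.foldl M.step (some (q, 0)) := rfl

lemma foldl_step_none (M : SeqAut Q A) (t : List A) : t.foldl M.step none = none := by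
  induction t with
  | nil => rfl
  | cons a t ih => simpa [SeqAut.step] using ih

lemma step_eq (M : SeqAut Q A) (q : Q) (s : ℕ → ℤ) (a : A) :
    M.step (some (q, s)) a =
      (M.δ q a).bind fun q' => (M.π q a).map fun w => (q', shift s + w) := rfl

lemma step_some {M : SeqAut Q A} {q : Q} {s : ℕ → ℤ} {a : A} {x : Q × (ℕ → ℤ)}
    (h : M.step (some (q, s)) a = some x) :
    ∃ q' w, M.δ q a = some q' ∧ M.π q a = some w ∧ x = (q', shift s + w) := by
  rcases hd : M.δ q a with _ | q'
  · rw [M.step_eq, hd] at h; simp at h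
  rcases hp : M.π q a with _ | w
  · rw [M.step_eq, hd, hp] at h; simp at h
  rw [M.step_eq, hd, hp] at h
  exact ⟨q', w, rfl, rfl, (Option.some.inj h).symm⟩

/-- The key shift lemma: running from an arbitrary initial sequence. -/
lemma foldl_shift (M : SeqAut Q A) (t : List A) : ∀ (q : Q) (s : ℕ → ℤ),
    t.foldl M.step (some (q, s)) =
      (t.foldl M.step (some (q, 0))).map
        (fun p => (p.1, (fun i => s (i + t.length)) + p.2)) := by
  induction t with
  | nil =>
    intro q s
    simp only [List.foldl_nil, List.length_nil, Option.map_some]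
    have h2 : ((fun i => s (i + 0)) + (0 : ℕ → ℤ)) = s := by
      funext i; simp
    show some (q, s) = some (q, (fun i => s (i + 0)) + (0 : ℕ → ℤ))
    rw [h2]
  | cons a t ih =>
    intro q s
    simp only [List.foldl_cons, List.length_cons]
    rcases hd : M.δ q a with _ | q'
    · have hstep : ∀ s₀ : ℕ → ℤ, M.step (some (q, s₀)) a = none := by
        intro s₀; rw [M.step_eq, hd]; rfl
      simp [hstep, M.foldl_step_none]
    rcases hp : M.π q a with _ | w
    · have hstep : ∀ s₀ : ℕ → ℤ, M.step (some (q, s₀)) a = none := by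
        intro s₀; rw [M.step_eq, hd, hp]; rfl
      simp [hstep, M.foldl_step_none]
    have hstep : ∀ s₀ : ℕ → ℤ, M.step (some (q, s₀)) a = some (q', shift s₀ + w) := by
      intro s₀; rw [M.step_eq, hd, hp]; rfl
    rw [hstep, hstep]
    have h0 : shift (0 : ℕ → ℤ) + w = w := by
      ext i; simp [shift]
    rw [h0, ih q' (shift s + w), ih q' w, Option.map_map]
    congr 1
    funext p
    simp only [Function.comp_apply]
    congr 1
    ext i
    simp only [Pi.add_apply, shift]
    rw [show i + (t.length + 1) = i + t.length + 1 from by omega]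
    ring

lemma run_append (M : SeqAut Q A) (q : Q) (u t : List A) :
    M.run q (u ++ t) = t.foldl M.step (M.run q u) := by
  simp [SeqAut.run, List.foldl_append]

/-- Membership of an extension `u ++ t` in terms of the state after `u`. -/
lemma mem_L0_append (M : SeqAut Q A) {u : List A} {q : Q} {s : ℕ → ℤ}
    (hu : M.run M.q0 u = some (q, s)) (t : List A) :
    (u ++ t) ∈ M.L0 ↔ ∃ p c, t.foldl M.step (some (q, 0)) = some (p, c) ∧
      p ∈ M.F ∧ s t.length + c 0 = 0 := by
  show (∃ (q' : Q) (s' : ℕ → ℤ), M.run M.q0 (u ++ t) = some (q', s') ∧ q' ∈ M.F ∧ s' 0 = 0) ↔ _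
  rw [show M.run M.q0 (u ++ t) = (t.foldl M.step (some (q, 0))).map
      (fun p => (p.1, (fun i => s (i + t.length)) + p.2)) from by
    rw [M.run_append, hu]; exact M.foldl_shift t q s]
  rcases hfold : t.foldl M.step (some (q, 0)) with _ | ⟨p, c⟩
  · simp
  · constructor
    · rintro ⟨q', s', heq, hF, h0⟩
      have heq' : p = q' ∧ ((fun i => s (i + t.length)) + c) = s' := by
        simpa [Prod.ext_iff] using Option.some.inj heq
      obtain ⟨rfl, rfl⟩ := heq'
      refine ⟨p, c, rfl, hF, ?_⟩
      simpa using h0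
    · rintro ⟨p', c', hpc, hF, h0⟩
      have heq' : p = p' ∧ c = c' := by
        simpa [Prod.ext_iff] using Option.some.inj hpc
      obtain ⟨rfl, rfl⟩ := heq'
      refine ⟨p, (fun i => s (i + t.length)) + c, rfl, hF, ?_⟩
      simpa using h0

end SeqAut

section Rec

/-- Generic determination lemma: a solution of a monic recurrence vanishing on
the first `d` values vanishes everywhere. -/
lemma rec_zero {α : Type*} [CommRing α] (d : ℕ) (c : ℕ → α) (hc : c d = 1) (f : ℕ → α)
    (hrec : ∀ n, ∑ j ∈ Finset.range (d + 1), c j * f (n + j) = 0)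
    (h0 : ∀ j < d, f j = 0) : ∀ n, f n = 0 := by
  intro n
  induction n using Nat.strong_induction_on with
  | _ n ih =>
    rcases lt_or_ge n d with h | h
    · exact h0 n h
    · obtain ⟨m, rfl⟩ := Nat.exists_eq_add_of_le h
      have := hrec m
      rw [Finset.sum_range_succ, hc, one_mul] at this
      have hz : ∑ j ∈ Finset.range d, c j * f (m + j) = 0 := by
        apply Finset.sum_eq_zero
        intro j hj
        rw [Finset.mem_range] at hj
        rw [ih (m + j) (by omega), mul_zero]
      rw [hz, zero_add] at this
      rwa [show d + m = m + d by ring]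

lemma satrec_zero (R : Polynomial ℤ) : SatisfiesRec R (0 : ℕ → ℤ) := by
  intro n; simp

lemma satrec_add (R : Polynomial ℤ) {s w : ℕ → ℤ} (hs : SatisfiesRec R s)
    (hw : SatisfiesRec R w) : SatisfiesRec R (s + w) := by
  intro n
  have := hs n
  have := hw n
  simp only [Pi.add_apply, mul_add, Finset.sum_add_distrib]
  omega

lemma satrec_shift (R : Polynomial ℤ) {s : ℕ → ℤ} (hs : SatisfiesRec R s) :
    SatisfiesRec R (shift s) := by
  intro n
  have := hs (n + 1)
  simpa [shift, show ∀ i, n + i + 1 = n + 1 + i by omega] using this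

/-- For `R = X^k * P`, the recurrence only involves shifted-by-`k` values through `P`. -/
lemma satrec_xk_mul {P : Polynomial ℤ} (hP : P.Monic) (k : ℕ) {s : ℕ → ℤ}
    (hs : SatisfiesRec (Polynomial.X ^ k * P) s) :
    ∀ n, ∑ j ∈ Finset.range (P.natDegree + 1), P.coeff j * s (n + k + j) = 0 := by
  intro n
  have hR : (Polynomial.X ^ k * P).natDegree = k + P.natDegree := by
    rw [Polynomial.natDegree_mul (pow_ne_zero k Polynomial.X_ne_zero) hP.ne_zero,
      Polynomial.natDegree_X_pow]
  have hcoeff : ∀ i, (Polynomial.X ^ k * P).coeff i =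
      if k ≤ i then P.coeff (i - k) else 0 := by
    intro i
    rw [mul_comm, Polynomial.coeff_mul_X_pow']
  have h := hs n
  rw [hR, show k + P.natDegree + 1 = k + (P.natDegree + 1) from by omega,
    Finset.sum_range_add] at h
  have h1 : ∑ i ∈ Finset.range k, (Polynomial.X ^ k * P).coeff i * s (n + i) = 0 := by
    apply Finset.sum_eq_zero
    intro i hi
    rw [Finset.mem_range] at hi
    rw [hcoeff, if_neg (by omega), zero_mul]
  rw [h1, zero_add] at h
  calc ∑ j ∈ Finset.range (P.natDegree + 1), P.coeff j * s (n + k + j)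
      = ∑ j ∈ Finset.range (P.natDegree + 1),
          (Polynomial.X ^ k * P).coeff (k + j) * s (n + (k + j)) := by
        apply Finset.sum_congr rfl
        intro j _
        rw [hcoeff, if_pos (by omega), show k + j - k = j from by omega,
          show n + (k + j) = n + k + j from by omega]
    _ = 0 := h

end Rec

lemma rec_zero' {α : Type*} [CommRing α] (d : ℕ) (c : ℕ → α) (hc : c d = 1) (f : ℕ → α)
    (hrec : ∀ n, ∑ j ∈ Finset.range (d + 1), c j * f (n + j) = 0)
    (h0 : ∀ j < d, f j = 0) : ∀ n, f n = 0 := by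
  intro n
  induction n using Nat.strong_induction_on with
  | _ n ih =>
    rcases lt_or_ge n d with h | h
    · exact h0 n h
    · obtain ⟨m, rfl⟩ := Nat.exists_eq_add_of_le h
      have := hrec m
      rw [Finset.sum_range_succ, hc, one_mul] at this
      have hz : ∑ j ∈ Finset.range d, c j * f (m + j) = 0 := by
        apply Finset.sum_eq_zero
        intro j hj
        rw [Finset.mem_range] at hj
        rw [ih (m + j) (by omega), mul_zero]
      rw [hz, zero_add] at this
      rwa [show d + m = m + d by ring]

/-- The key analytic decomposition: an integer solution of a Pisot recurrence is a
dominant real geometric term plus a geometrically decaying error. -/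
lemma pisot_decomp {P : Polynomial ℤ} (hP : IsPisotPoly P) :
    ∃ θ ρ : ℝ, 1 < θ ∧ 0 < ρ ∧ ρ < 1 ∧
      ∀ w : ℕ → ℤ,
        (∀ n, ∑ j ∈ Finset.range (P.natDegree + 1), P.coeff j * w (n + j) = 0) →
        ∃ a C : ℝ, 0 ≤ C ∧ ∀ m, |(w m : ℝ) - a * θ ^ m| ≤ C * ρ ^ m := by
  classical
  obtain ⟨hmonic, hirr, θ, hθ1, hroot, hothers⟩ := hP
  set d := P.natDegree with hd_def
  set Pc := P.map (Int.castRingHom ℂ) with hPc_def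
  have hPc_monic : Pc.Monic := hmonic.map _
  have hPc_deg : Pc.natDegree = d := hmonic.natDegree_map _
  have hd_pos : 0 < d := by
    -- irreducibility over ℚ gives positive degree
    have hirrq : Irreducible (P.map (Int.castRingHom ℚ)) :=
      (Polynomial.IsPrimitive.Int.irreducible_iff_irreducible_map_cast
        hmonic.isPrimitive).mp hirr
    have := hirrq.natDegree_pos
    rwa [hmonic.natDegree_map] at this
  have hirrq : Irreducible (P.map (Int.castRingHom ℚ)) :=
    (Polynomial.IsPrimitive.Int.irreducible_iff_irreducible_map_cast
      hmonic.isPrimitive).mp hirr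
  have hsepq : (P.map (Int.castRingHom ℚ)).Separable := hirrq.separable
  have hmapmap : Pc = (P.map (Int.castRingHom ℚ)).map (algebraMap ℚ ℂ) := by
    rw [hPc_def, Polynomial.map_map,
      Subsingleton.elim ((algebraMap ℚ ℂ).comp (Int.castRingHom ℚ)) (Int.castRingHom ℂ)]
  have hsepc : Pc.Separable := by
    rw [hmapmap]; exact hsepq.map
  have hnodup : Pc.roots.Nodup := Polynomial.nodup_roots hsepc
  have hsplits : Pc.Splits := IsAlgClosed.splits _
  have hcard : Pc.roots.card = d := by
    rw [← hPc_deg]; exact Polynomial.splits_iff_card_roots.mp hsplits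
  set l := Pc.roots.toList with hl_def
  have hlen : l.length = d := by rw [hl_def, Multiset.length_toList, hcard]
  set z : Fin d → ℂ := fun i => l.get (Fin.cast hlen.symm i) with hz_def
  have hznodup : l.Nodup := by
    rw [← Multiset.coe_nodup, Multiset.coe_toList]
    exact hnodup
  have hzinj : Function.Injective z := by
    intro i j hij
    have := (List.nodup_iff_injective_get.mp hznodup) hij
    exact Fin.cast_injective _ (by exact this)
  have hzroot : ∀ i, Pc.eval (z i) = 0 := by
    intro i
    have hmem : z i ∈ Pc.roots := by
      rw [← Multiset.mem_toList]
      exact List.get_mem l _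
    exact (Polynomial.mem_roots hPc_monic.ne_zero).mp hmem
  have hzP : ∀ i, Polynomial.aeval (z i) P = 0 := by
    intro i
    rw [Polynomial.aeval_def, ← Polynomial.eval_map]
    exact hzroot i
  have hzcases : ∀ i, z i = (θ : ℂ) ∨ ‖z i‖ < 1 := by
    intro i
    by_cases h : z i = (θ : ℂ)
    · exact Or.inl h
    · exact Or.inr (hothers (z i) (hzP i) h).2
  haveI : Nonempty (Fin d) := ⟨⟨0, hd_pos⟩⟩
  set ρ : ℝ := max (Finset.univ.sup' Finset.univ_nonempty
      (fun i => if z i = (θ : ℂ) then (1 : ℝ)/2 else ‖z i‖)) (1/2) with hρ_def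
  have hρpos : 0 < ρ := lt_of_lt_of_le (by norm_num) (le_max_right _ _)
  have hρlt : ρ < 1 := by
    rw [hρ_def]
    apply max_lt _ (by norm_num)
    rw [Finset.sup'_lt_iff]
    intro i _
    by_cases h : z i = (θ : ℂ)
    · rw [if_pos h]; norm_num
    · rw [if_neg h]; exact (hothers (z i) (hzP i) h).2
  have hρbound : ∀ i, z i ≠ (θ : ℂ) → ‖z i‖ ≤ ρ := by
    intro i h
    refine le_trans ?_ (le_max_left _ _)
    refine le_trans ?_ (Finset.le_sup' _ (Finset.mem_univ i))
    rw [if_neg h]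
  refine ⟨θ, ρ, hθ1, hρpos, hρlt, ?_⟩
  intro w hw
  set v : ℕ → ℂ := fun n => (w n : ℂ) with hv_def
  have hv : ∀ n, ∑ j ∈ Finset.range (d + 1), (P.coeff j : ℂ) * v (n + j) = 0 := by
    intro n
    have := hw n
    have := congrArg (Int.cast : ℤ → ℂ) this
    push_cast at this
    simpa using this
  set Mv : Matrix (Fin d) (Fin d) ℂ := fun j i => z i ^ (j : ℕ) with hMv_def
  have hMvdet : Mv.det ≠ 0 := by
    have h : Mv = (Matrix.vandermonde z).transpose := by
      ext j i; rfl
    rw [h, Matrix.det_transpose]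
    exact Matrix.det_vandermonde_ne_zero_iff.mpr hzinj
  set lam : Fin d → ℂ := (Mv⁻¹).mulVec (fun j : Fin d => v (j : ℕ)) with hlam_def
  have hlam : Mv.mulVec lam = fun j : Fin d => v (j : ℕ) := by
    rw [hlam_def, Matrix.mulVec_mulVec, Matrix.mul_nonsing_inv _ (isUnit_iff_ne_zero.mpr hMvdet),
      Matrix.one_mulVec]
  set g : ℕ → ℂ := fun n => ∑ i, lam i * z i ^ n with hg_def
  have hg_init : ∀ j : Fin d, g (j : ℕ) = v (j : ℕ) := by
    intro j
    have := congrFun hlam j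
    rw [Matrix.mulVec, dotProduct] at this
    rw [hg_def, ← this]
    apply Finset.sum_congr rfl
    intro i _
    rw [hMv_def]
    ring
  have hPc_eval : ∀ x : ℂ, Pc.eval x = ∑ j ∈ Finset.range (d + 1), (P.coeff j : ℂ) * x ^ j := by
    intro x
    rw [Polynomial.eval_eq_sum_range, hPc_deg]
    apply Finset.sum_congr rfl
    intro j _
    rw [hPc_def, Polynomial.coeff_map]
    simp
  have hg_rec : ∀ n, ∑ j ∈ Finset.range (d + 1), (P.coeff j : ℂ) * g (n + j) = 0 := by
    intro n
    have key : ∀ i : Fin d, (∑ j ∈ Finset.range (d + 1), (P.coeff j : ℂ) * z i ^ j) = 0 := by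
      intro i
      rw [← hPc_eval]
      exact hzroot i
    calc ∑ j ∈ Finset.range (d + 1), (P.coeff j : ℂ) * g (n + j)
        = ∑ j ∈ Finset.range (d + 1), ∑ i : Fin d,
            lam i * z i ^ n * ((P.coeff j : ℂ) * z i ^ j) := by
          apply Finset.sum_congr rfl
          intro j _
          rw [hg_def, Finset.mul_sum]
          apply Finset.sum_congr rfl
          intro i _
          rw [pow_add]
          ring
      _ = ∑ i : Fin d, lam i * z i ^ n *
            (∑ j ∈ Finset.range (d + 1), (P.coeff j : ℂ) * z i ^ j) := by
          rw [Finset.sum_comm]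
          apply Finset.sum_congr rfl
          intro i _
          rw [Finset.mul_sum]
      _ = 0 := by
          apply Finset.sum_eq_zero
          intro i _
          rw [key i, mul_zero]
  have hvg : ∀ n, v n = g n := by
    have := rec_zero' d (fun j => (P.coeff j : ℂ)) (by
        simpa [hd_def] using congrArg (Int.cast : ℤ → ℂ) hmonic.coeff_natDegree)
      (fun n => v n - g n)
      (by
        intro n
        simp only [mul_sub, Finset.sum_sub_distrib]
        rw [hv n, hg_rec n, sub_zero])
      (by
        intro j hj
        have := hg_init ⟨j, hj⟩
        simp only [Fin.val_mk] at this
        show v j - g j = 0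
        rw [this, sub_self])
    intro n
    have h := this n
    linear_combination (norm := ring_nf) h
  -- now split into the θ-part and the rest
  set S : Finset (Fin d) := Finset.univ.filter (fun i => z i = (θ : ℂ)) with hS_def
  set Lam : ℂ := ∑ i ∈ S, lam i with hLam_def
  set C : ℝ := ∑ i ∈ Sᶜ, ‖lam i‖ with hC_def
  refine ⟨Lam.re, C, Finset.sum_nonneg fun i _ => norm_nonneg _, ?_⟩
  intro m
  have hsplit : g m = Lam * (θ : ℂ) ^ m + ∑ i ∈ Sᶜ, lam i * z i ^ m := by
    show ∑ i : Fin d, lam i * z i ^ m = _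
    rw [← Finset.sum_add_sum_compl S (fun i => lam i * z i ^ m)]
    congr 1
    rw [hLam_def, Finset.sum_mul]
    apply Finset.sum_congr rfl
    intro i hi
    rw [hS_def, Finset.mem_filter] at hi
    rw [hi.2]
  have herr : ‖∑ i ∈ Sᶜ, lam i * z i ^ m‖ ≤ C * ρ ^ m := by
    refine le_trans (norm_sum_le _ _) ?_
    rw [hC_def, Finset.sum_mul]
    apply Finset.sum_le_sum
    intro i hi
    rw [norm_mul, norm_pow]
    apply mul_le_mul_of_nonneg_left _ (norm_nonneg _)
    apply pow_le_pow_left₀ (norm_nonneg _)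
    apply hρbound
    rw [hS_def, Finset.mem_compl, Finset.mem_filter] at hi
    intro h
    exact hi (⟨Finset.mem_univ i, h⟩)
  have hre : (w m : ℝ) - Lam.re * θ ^ m = (∑ i ∈ Sᶜ, lam i * z i ^ m).re := by
    have h1 : v m = Lam * (θ : ℂ) ^ m + ∑ i ∈ Sᶜ, lam i * z i ^ m := by
      rw [hvg m, hsplit]
    have h2 := congrArg Complex.re h1
    rw [hv_def] at h2
    simp only [Complex.intCast_re] at h2
    have h3 : (Lam * (θ : ℂ) ^ m).re = Lam.re * θ ^ m := by
      simp [← Complex.ofReal_pow, Complex.mul_re]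
    rw [Complex.add_re, h3] at h2
    linarith
  rw [hre]
  exact le_trans (Complex.abs_re_le_norm _) herr

section Invariant

/-- How far the dominant-term approximation can certify a weight sequence. -/
def GoodW (k : ℕ) (θ ρ Amax Cmax Dmax : ℝ) (w : ℕ → ℤ) : Prop :=
  ∃ aw : ℝ, |aw| ≤ Amax ∧ (∀ m, k ≤ m → |(w m : ℝ) - aw * θ ^ m| ≤ Cmax * ρ ^ m) ∧
    (∀ m, |(w m : ℝ) - aw * θ ^ m| ≤ Dmax)

/-- The invariant maintained along a run of length `n`. -/
def Good (R : Polynomial ℤ) (k : ℕ) (θ ρ Amax E Dmax : ℝ) (n : ℕ) (s : ℕ → ℤ) : Prop :=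
  SatisfiesRec R s ∧ ∃ a : ℝ, |a| ≤ Amax * (θ ^ n - 1) / (θ - 1) ∧
    (∀ m, k ≤ m → |(s m : ℝ) - a * θ ^ m| ≤ E * ρ ^ m) ∧
    (∀ m, |(s m : ℝ) - a * θ ^ m| ≤ (n : ℝ) * Dmax)

lemma nat_mul_le_pow {θ : ℝ} (hθ : 1 < θ) : ∀ n : ℕ, (n : ℝ) * (θ - 1) ≤ θ ^ n
  | 0 => by simp
  | (n + 1) => by
    have ih := nat_mul_le_pow hθ n
    have h1 : (1 : ℝ) ≤ θ ^ n := one_le_pow₀ hθ.le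
    push_cast
    rw [pow_succ]
    nlinarith

lemma good_zero (R : Polynomial ℤ) (k : ℕ) {θ ρ Amax E Dmax : ℝ}
    (hθ : 1 < θ) (hρ0 : 0 < ρ) (hA : 0 ≤ Amax) (hE0 : 0 ≤ E) :
    Good R k θ ρ Amax E Dmax 0 0 := by
  refine ⟨satrec_zero R, 0, by simp, ?_, by simp⟩
  intro m hm
  simp only [Pi.zero_apply, Int.cast_zero, zero_mul, sub_zero, abs_zero]
  positivity

lemma good_step {R : Polynomial ℤ} {k : ℕ} {θ ρ Amax Cmax E Dmax : ℝ} {n : ℕ} {s w : ℕ → ℤ}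
    (hθ : 1 < θ) (hρ0 : 0 < ρ) (hA : 0 ≤ Amax)
    (hEkey : E * ρ + Cmax ≤ E)
    (hs : Good R k θ ρ Amax E Dmax n s) (hw : GoodW k θ ρ Amax Cmax Dmax w)
    (hws : SatisfiesRec R w) :
    Good R k θ ρ Amax E Dmax (n + 1) (shift s + w) := by
  obtain ⟨hsr, a, ha, h1, h2⟩ := hs
  obtain ⟨aw, haw, hw1, hw2⟩ := hw
  have hcast : ∀ m : ℕ, (((shift s + w) m : ℤ) : ℝ) = (s (m + 1) : ℝ) + (w m : ℝ) := by
    intro m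
    simp only [Pi.add_apply, shift]
    push_cast
    ring
  refine ⟨satrec_add R (satrec_shift R hsr) hws, a * θ + aw, ?_, ?_, ?_⟩
  · have hθ1 : (0 : ℝ) < θ - 1 := by linarith
    have e1 : Amax * (θ ^ n - 1) / (θ - 1) * θ + Amax = Amax * (θ ^ (n + 1) - 1) / (θ - 1) := by
      field_simp
      ring
    calc |a * θ + aw| ≤ |a| * θ + |aw| := by
          refine le_trans (abs_add_le _ _) ?_
          rw [abs_mul, abs_of_pos (by linarith : (0 : ℝ) < θ)]
      _ ≤ Amax * (θ ^ n - 1) / (θ - 1) * θ + Amax := by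
          have := mul_le_mul_of_nonneg_right ha (by linarith : (0 : ℝ) ≤ θ)
          linarith
      _ = _ := e1
  · intro m hm
    have hsplit : (((shift s + w) m : ℤ) : ℝ) - (a * θ + aw) * θ ^ m =
        ((s (m + 1) : ℝ) - a * θ ^ (m + 1)) + ((w m : ℝ) - aw * θ ^ m) := by
      rw [hcast, pow_succ]
      ring
    rw [hsplit]
    refine le_trans (abs_add_le _ _) ?_
    have g1 := h1 (m + 1) (by omega)
    have g2 := hw1 m hm
    have g3 : E * ρ ^ (m + 1) + Cmax * ρ ^ m ≤ E * ρ ^ m := by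
      rw [pow_succ]
      have hρm : (0 : ℝ) ≤ ρ ^ m := by positivity
      nlinarith
    linarith
  · intro m
    have hsplit : (((shift s + w) m : ℤ) : ℝ) - (a * θ + aw) * θ ^ m =
        ((s (m + 1) : ℝ) - a * θ ^ (m + 1)) + ((w m : ℝ) - aw * θ ^ m) := by
      rw [hcast, pow_succ]
      ring
    rw [hsplit]
    refine le_trans (abs_add_le _ _) ?_
    have g1 := h2 (m + 1)
    have g2 := hw2 m
    push_cast
    linarith

lemma good_run {Q A : Type*} {M : SeqAut Q A} {R : Polynomial ℤ} {k : ℕ}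
    {θ ρ Amax Cmax E Dmax : ℝ}
    (hθ : 1 < θ) (hρ0 : 0 < ρ) (hA : 0 ≤ Amax) (hE0 : 0 ≤ E) (hEkey : E * ρ + Cmax ≤ E)
    (hall : ∀ q b w, M.π q b = some w → GoodW k θ ρ Amax Cmax Dmax w ∧ SatisfiesRec R w) :
    ∀ (u : List A) (q p : Q) (s : ℕ → ℤ),
      u.foldl M.step (some (q, 0)) = some (p, s) → Good R k θ ρ Amax E Dmax u.length s := by
  intro u
  induction u using List.reverseRecOn with
  | nil =>
    intro q p s h
    obtain rfl : (0 : ℕ → ℤ) = s := congrArg Prod.snd (Option.some.inj h)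
    exact good_zero R k hθ hρ0 hA hE0
  | append_singleton u b ih =>
    intro q p s h
    rw [List.foldl_append, List.foldl_cons, List.foldl_nil] at h
    rcases hu : u.foldl M.step (some (q, 0)) with _ | ⟨p₀, s₀⟩
    · rw [hu] at h
      simp [SeqAut.step] at h
    · rw [hu] at h
      obtain ⟨q', w, hδ, hπ, hx⟩ := SeqAut.step_some h
      have h1 := ih q p₀ s₀ hu
      have h2 := hall p₀ b w hπ
      have h3 := good_step hθ hρ0 hA hEkey h1 h2.1 h2.2
      have hs : s = shift s₀ + w := congrArg Prod.snd hx
      rw [List.length_append, List.length_singleton, hs]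
      exact h3

lemma good_c0 {R : Polynomial ℤ} {k : ℕ} {θ ρ Amax E Dmax : ℝ} {n : ℕ} {s : ℕ → ℤ}
    (hθ : 1 < θ) (hA : 0 ≤ Amax) (hD : 0 ≤ Dmax)
    (h : Good R k θ ρ Amax E Dmax n s) :
    |(s 0 : ℝ)| ≤ (Amax + Dmax) / (θ - 1) * θ ^ n := by
  obtain ⟨-, a, ha, -, h2⟩ := h
  have h0 := h2 0
  rw [pow_zero, mul_one] at h0
  have hn := nat_mul_le_pow hθ n
  have hθ1 : (0 : ℝ) < θ - 1 := by linarith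
  have h3 : (n : ℝ) * Dmax ≤ Dmax * θ ^ n / (θ - 1) := by
    rw [le_div_iff₀ hθ1]
    nlinarith
  have h4 : Amax * (θ ^ n - 1) / (θ - 1) ≤ Amax * θ ^ n / (θ - 1) := by
    apply (div_le_div_iff_of_pos_right hθ1).mpr
    nlinarith
  have h5 : (Amax + Dmax) / (θ - 1) * θ ^ n =
      Amax * θ ^ n / (θ - 1) + Dmax * θ ^ n / (θ - 1) := by
    ring
  calc |(s 0 : ℝ)| = |a + ((s 0 : ℝ) - a)| := by ring_nf
    _ ≤ |a| + |(s 0 : ℝ) - a| := abs_add_le _ _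
    _ ≤ Amax * (θ ^ n - 1) / (θ - 1) + (n : ℝ) * Dmax := by linarith
    _ ≤ (Amax + Dmax) / (θ - 1) * θ ^ n := by rw [h5]; linarith

/-- Determination: two solutions of the `X^k P` recurrence agreeing on the window
`[k, k + deg P)` agree everywhere from `k` on. -/
lemma window_det {P : Polynomial ℤ} (hm : P.Monic) (k : ℕ) {s₁ s₂ : ℕ → ℤ}
    (h1 : SatisfiesRec (Polynomial.X ^ k * P) s₁)
    (h2 : SatisfiesRec (Polynomial.X ^ k * P) s₂)
    (hw : ∀ j < P.natDegree, s₁ (k + j) = s₂ (k + j)) :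
    ∀ m, k ≤ m → s₁ m = s₂ m := by
  have key := rec_zero' P.natDegree (fun j => P.coeff j) hm.coeff_natDegree
    (fun n => s₁ (n + k) - s₂ (n + k))
    (by
      intro n
      have a1 := satrec_xk_mul hm k h1 n
      have a2 := satrec_xk_mul hm k h2 n
      calc ∑ j ∈ Finset.range (P.natDegree + 1),
            P.coeff j * ((fun n => s₁ (n + k) - s₂ (n + k)) (n + j))
          = ∑ j ∈ Finset.range (P.natDegree + 1),
              (P.coeff j * s₁ (n + k + j) - P.coeff j * s₂ (n + k + j)) := by
            apply Finset.sum_congr rfl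
            intro j _
            have e : n + j + k = n + k + j := by omega
            simp only [e]
            ring
        _ = 0 := by
            rw [Finset.sum_sub_distrib, a1, a2, sub_zero])
    (by
      intro j hj
      have := hw j hj
      rw [show j + k = k + j from by omega, this, sub_self])
  intro m hmk
  have hk := key (m - k)
  rw [show m - k + k = m from by omega] at hk
  omega

/-- Deep liveness: the value sequence can be completed to acceptance by a word
of length at least `k`. -/
def DeepLive {Q A : Type*} (M : SeqAut Q A) (k : ℕ) (q : Q) (s : ℕ → ℤ) : Prop :=
  ∃ (t : List A) (p : Q) (c : ℕ → ℤ), k ≤ t.length ∧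
    t.foldl M.step (some (q, 0)) = some (p, c) ∧ p ∈ M.F ∧ s t.length + c 0 = 0

/-- The finite encoding of a value sequence. -/
noncomputable def code {Q A : Type*} (M : SeqAut Q A) (k d : ℕ) (N : ℤ) (q : Q) (s : ℕ → ℤ) :
    Fin (k + d) → Option (Set.Icc (-N) N) := fun i =>
  letI := Classical.propDecidable
    (s i ∈ Set.Icc (-N) N ∧ ((k : ℕ) ≤ (i : ℕ) → DeepLive M k q s))
  if h : s i ∈ Set.Icc (-N) N ∧ ((k : ℕ) ≤ (i : ℕ) → DeepLive M k q s) then some ⟨s i, h.1⟩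
  else none

lemma code_pos {Q A : Type*} (M : SeqAut Q A) (k d : ℕ) (N : ℤ) (q : Q) (s : ℕ → ℤ)
    (i : Fin (k + d)) (h : s i ∈ Set.Icc (-N) N ∧ ((k : ℕ) ≤ (i : ℕ) → DeepLive M k q s)) :
    code M k d N q s i = some ⟨s i, h.1⟩ := by
  rw [code]
  exact dif_pos h

lemma code_neg {Q A : Type*} (M : SeqAut Q A) (k d : ℕ) (N : ℤ) (q : Q) (s : ℕ → ℤ)
    (i : Fin (k + d)) (h : ¬(s i ∈ Set.Icc (-N) N ∧ ((k : ℕ) ≤ (i : ℕ) → DeepLive M k q s))) :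
    code M k d N q s i = none := by
  rw [code]
  exact dif_neg h

end Invariant

/-- the language of a linear recurrence sequence automaton whose
recurrence polynomial (a common recurrence satisfied by all weight sequences)
is ultimately Pisot is regular. -/
theorem linrec_ultimately_pisot_regular [Fintype Q] [Fintype A]
    (M : SeqAut Q A) (R : Polynomial ℤ) (hR : UltimatelyPisotPoly R)
    (hlin : ∀ q a w, M.π q a = some w → SatisfiesRec R w) :
    M.L0.IsRegular := by
  classical
  obtain ⟨k, P, hPP, rfl⟩ := hR
  have hmonic : P.Monic := hPP.1
  obtain ⟨θ, ρ, hθ1, hρ0, hρ1, hdec⟩ := pisot_decomp hPP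
  have hθ0 : (0 : ℝ) < θ := by linarith
  set d := P.natDegree with hd_def
  have tri : ∀ x y : ℝ, |x| ≤ |y| + |x - y| := by
    intro x y
    calc |x| = |y + (x - y)| := by ring_nf
      _ ≤ |y| + |x - y| := abs_add_le _ _
  -- per-transition decomposition data
  have hWdec : ∀ qa : Q × A, ∃ aw Cw Wb : ℝ, 0 ≤ Cw ∧ 0 ≤ Wb ∧
      ∀ w, M.π qa.1 qa.2 = some w →
        (∀ m, k ≤ m → |(w m : ℝ) - aw * θ ^ m| ≤ Cw * ρ ^ m) ∧
        (∀ m, m < k → |(w m : ℝ)| ≤ Wb) := by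
    intro qa
    rcases hπ : M.π qa.1 qa.2 with _ | w
    · exact ⟨0, 0, 0, le_refl 0, le_refl 0, fun w hw => by simp at hw⟩
    · have hsr : SatisfiesRec (Polynomial.X ^ k * P) w := hlin _ _ _ hπ
      have hrec := satrec_xk_mul hmonic k hsr
      set ws : ℕ → ℤ := fun i => w (i + k) with hws_def
      have hrec' : ∀ n, ∑ j ∈ Finset.range (d + 1), P.coeff j * ws (n + j) = 0 := by
        intro n
        calc ∑ j ∈ Finset.range (d + 1), P.coeff j * ws (n + j)
            = ∑ j ∈ Finset.range (d + 1), P.coeff j * w (n + k + j) := by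
              apply Finset.sum_congr rfl
              intro j _
              rw [hws_def]
              simp only
              rw [show n + j + k = n + k + j from by omega]
          _ = 0 := hrec n
      obtain ⟨a, C, hC0, hb⟩ := hdec ws hrec'
      have hθk : (0:ℝ) < θ ^ k := pow_pos hθ0 k
      have hρk : (0:ℝ) < ρ ^ k := pow_pos hρ0 k
      refine ⟨a / θ ^ k, C / ρ ^ k, ∑ i ∈ Finset.range k, |(w i : ℝ)|,
        div_nonneg hC0 hρk.le, Finset.sum_nonneg fun _ _ => abs_nonneg _, ?_⟩
      intro w' hw'
      obtain rfl : w = w' := Option.some.inj hw'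
      constructor
      · intro m hm
        obtain ⟨j, rfl⟩ : ∃ j, m = j + k := ⟨m - k, by omega⟩
        have h := hb j
        rw [hws_def] at h
        simp only at h
        have e1 : a / θ ^ k * θ ^ (j + k) = a * θ ^ j := by
          rw [pow_add]
          field_simp
        have e2 : C / ρ ^ k * ρ ^ (j + k) = C * ρ ^ j := by
          rw [pow_add]
          field_simp
        rw [e1, e2]
        exact h
      · intro m hm
        exact Finset.single_le_sum (f := fun i => |(w i : ℝ)|)
          (fun i _ => abs_nonneg _) (Finset.mem_range.mpr hm)
  choose aw Cw Wb hCw0 hWb0 hwspec using hWdec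
  obtain ⟨A0, hA0⟩ := (Set.finite_range fun qa => |aw qa|).bddAbove
  obtain ⟨C0, hC0b⟩ := (Set.finite_range Cw).bddAbove
  obtain ⟨W0, hW0⟩ := (Set.finite_range Wb).bddAbove
  set Amax := max A0 0 with hAmax_def
  have hAmax : ∀ qa, |aw qa| ≤ Amax := fun qa =>
    le_trans (hA0 ⟨qa, rfl⟩) (le_max_left _ _)
  have hAmax0 : (0:ℝ) ≤ Amax := le_max_right _ _
  set Cmax := max C0 0 with hCmax_def
  have hCmax : ∀ qa, Cw qa ≤ Cmax := fun qa =>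
    le_trans (hC0b ⟨qa, rfl⟩) (le_max_left _ _)
  have hCmax0 : (0:ℝ) ≤ Cmax := le_max_right _ _
  set Wmax := max W0 0 with hWmax_def
  have hWmax : ∀ qa, Wb qa ≤ Wmax := fun qa =>
    le_trans (hW0 ⟨qa, rfl⟩) (le_max_left _ _)
  have hWmax0 : (0:ℝ) ≤ Wmax := le_max_right _ _
  have h1ρ : (0:ℝ) < 1 - ρ := by linarith
  set E := Cmax / (1 - ρ) with hE_def
  have hE0 : (0:ℝ) ≤ E := div_nonneg hCmax0 h1ρ.le
  have hEkey : E * ρ + Cmax ≤ E := by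
    have hE1 : E * (1 - ρ) = Cmax := by
      rw [hE_def]
      field_simp
    nlinarith
  set Dmax := Cmax + Wmax + Amax * θ ^ k with hD_def
  have hθk0 : (0:ℝ) < θ ^ k := pow_pos hθ0 k
  have hDmax0 : (0:ℝ) ≤ Dmax :=
    add_nonneg (add_nonneg hCmax0 hWmax0) (mul_nonneg hAmax0 hθk0.le)
  have hall : ∀ q b w, M.π q b = some w →
      GoodW k θ ρ Amax Cmax Dmax w ∧ SatisfiesRec (Polynomial.X ^ k * P) w := by
    intro q b w hπ
    obtain ⟨hk, hlt⟩ := hwspec (q, b) w hπ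
    refine ⟨⟨aw (q, b), hAmax _, ?_, ?_⟩, hlin _ _ _ hπ⟩
    · intro m hm
      exact le_trans (hk m hm)
        (mul_le_mul_of_nonneg_right (hCmax _) (pow_nonneg hρ0.le m))
    · intro m
      rcases lt_or_ge m k with h | h
      · have h1 := hlt m h
        have h2 : |aw (q, b) * θ ^ m| ≤ Amax * θ ^ k := by
          rw [abs_mul, abs_of_pos (pow_pos hθ0 m)]
          exact mul_le_mul (hAmax _) (pow_le_pow_right₀ hθ1.le h.le)
            (pow_nonneg hθ0.le m) hAmax0
        have h3 : |(w m : ℝ) - aw (q, b) * θ ^ m| ≤ |(w m : ℝ)| + |aw (q, b) * θ ^ m| := by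
          rw [sub_eq_add_neg]
          refine le_trans (abs_add_le _ _) ?_
          rw [abs_neg]
        have h4 := hWmax (q, b)
        rw [hD_def]
        linarith
      · have h1 := hk m h
        have h2 : Cw (q, b) * ρ ^ m ≤ Cmax := by
          have hρm1 : ρ ^ m ≤ 1 := pow_le_one₀ hρ0.le hρ1.le
          calc Cw (q, b) * ρ ^ m ≤ Cmax * ρ ^ m :=
                mul_le_mul_of_nonneg_right (hCmax _) (pow_nonneg hρ0.le m)
            _ ≤ Cmax * 1 := mul_le_mul_of_nonneg_left hρm1 hCmax0
            _ = Cmax := mul_one _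
        have h3 : Cmax ≤ Dmax := by
          rw [hD_def]
          nlinarith [mul_nonneg hAmax0 hθk0.le]
        linarith
  have hrun := good_run (M := M) (R := Polynomial.X ^ k * P)
    hθ1 hρ0 hAmax0 hE0 hEkey hall
  have hθm1 : (0:ℝ) < θ - 1 := by linarith
  have hKc0 : (0:ℝ) ≤ (Amax + Dmax) / (θ - 1) := div_nonneg (by linarith) hθm1.le
  have hθkd1 : (1:ℝ) ≤ θ ^ (k + d) := one_le_pow₀ hθ1.le
  set N : ℤ := ⌈(Amax + Dmax) / (θ - 1) * θ ^ (k + d) + E * θ ^ (k + d) + E⌉ with hN_def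
  have hXN : (Amax + Dmax) / (θ - 1) * θ ^ (k + d) + E * θ ^ (k + d) + E ≤ (N : ℝ) :=
    Int.le_ceil _
  -- the finite encoding
  set e : List A → Option (Q × (Fin (k + d) → Option (Set.Icc (-N) N))) :=
    fun u => (M.run M.q0 u).map fun p => (p.1, code M k d N p.1 p.2) with he_def
  apply regular_of_encode e
  intro u u' he t
  have hnone : ∀ (v : List A), M.run M.q0 v = none → (v ++ t) ∉ M.L0 := by
    intro v hv hmem
    obtain ⟨q, s, hqs, -, -⟩ := hmem
    rw [M.run_append, hv, M.foldl_step_none] at hqs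
    simp at hqs
  rcases hru : M.run M.q0 u with _ | ⟨q, s⟩ <;> rcases hru' : M.run M.q0 u' with _ | ⟨q', s'⟩
  · exact iff_of_false (hnone u hru) (hnone u' hru')
  · have he2 := he
    simp [he_def, hru, hru'] at he2
  · have he2 := he
    simp [he_def, hru, hru'] at he2
  · -- both runs defined
    have he2 := he
    simp only [he_def, hru, hru', Option.map_some] at he2
    have hpair := Option.some.inj he2
    have hq : q = q' := congrArg Prod.fst hpair
    subst hq
    have hcode : code M k d N q s = code M k d N q s' := congrArg Prod.snd hpair
    have hGs := hrun u M.q0 q s (by rw [← M.run_def]; exact hru)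
    have hGs' := hrun u' M.q0 q s' (by rw [← M.run_def]; exact hru')
    rw [M.mem_L0_append hru t, M.mem_L0_append hru' t]
    rcases hfold : t.foldl M.step (some (q, 0)) with _ | ⟨p, c⟩
    · simp
    by_cases hpF : p ∈ M.F
    · have hGc := hrun t q p c hfold
      have hc0b := good_c0 hθ1 hAmax0 hDmax0 hGc
      have key : ∀ (n₁ n₂ : ℕ) (s₁ s₂ : ℕ → ℤ),
          Good (Polynomial.X ^ k * P) k θ ρ Amax E Dmax n₁ s₁ →
          Good (Polynomial.X ^ k * P) k θ ρ Amax E Dmax n₂ s₂ →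
          code M k d N q s₁ = code M k d N q s₂ →
          s₁ t.length + c 0 = 0 → s₂ t.length + c 0 = 0 := by
        intro n₁ n₂ s₁ s₂ hG1 hG2 hcd h0
        rcases lt_or_ge t.length k with hmk | hmk
        · -- shallow case: the value itself is stored in the code
          have h1 : s₁ t.length = - c 0 := by omega
          have hb1 : |(s₁ t.length : ℝ)| ≤ (N : ℝ) := by
            rw [h1]
            push_cast
            rw [abs_neg]
            have b2 : (Amax + Dmax) / (θ - 1) * θ ^ t.length ≤
                (Amax + Dmax) / (θ - 1) * θ ^ (k + d) :=
              mul_le_mul_of_nonneg_left (pow_le_pow_right₀ hθ1.le (by omega)) hKc0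
            have b3 : (0:ℝ) ≤ E * θ ^ (k + d) := mul_nonneg hE0 (pow_nonneg hθ0.le _)
            linarith
          have hmem1 : s₁ t.length ∈ Set.Icc (-N) N := by
            rw [Set.mem_Icc]
            have hb := abs_le.mp hb1
            constructor
            · exact_mod_cast hb.1
            · exact_mod_cast hb.2
          have hcond1 : s₁ ((⟨t.length, by omega⟩ : Fin (k + d)) : ℕ) ∈ Set.Icc (-N) N ∧
              ((k : ℕ) ≤ ((⟨t.length, by omega⟩ : Fin (k + d)) : ℕ) → DeepLive M k q s₁) :=
            ⟨hmem1, fun hk' => absurd (show k ≤ t.length from hk') (Nat.not_le.mpr hmk)⟩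
          have e1 := code_pos M k d N q s₁ ⟨t.length, by omega⟩ hcond1
          have e2 := congrFun hcd (⟨t.length, by omega⟩ : Fin (k + d))
          rw [e1] at e2
          by_cases hcond2 : s₂ ((⟨t.length, by omega⟩ : Fin (k + d)) : ℕ) ∈ Set.Icc (-N) N ∧
              ((k : ℕ) ≤ ((⟨t.length, by omega⟩ : Fin (k + d)) : ℕ) → DeepLive M k q s₂)
          · rw [code_pos M k d N q s₂ _ hcond2] at e2
            have hval : s₁ t.length = s₂ t.length :=
              congrArg Subtype.val (Option.some.inj e2)
            omega
          · rw [code_neg M k d N q s₂ _ hcond2] at e2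
            simp at e2
        · -- deep case: the window is stored in the code
          have hDL : DeepLive M k q s₁ := ⟨t, p, c, hmk, hfold, hpF, h0⟩
          obtain ⟨hsr1, a₁, ha₁, h1k, -⟩ := hG1
          have h1 : s₁ t.length = - c 0 := by omega
          have hc1 := h1k t.length hmk
          have hρθ : ∀ m : ℕ, ρ ^ m ≤ θ ^ m := fun m =>
            pow_le_pow_left₀ hρ0.le (by linarith) m
          have ha₁b : |a₁| ≤ (Amax + Dmax) / (θ - 1) + E := by
            have t3 : |(s₁ t.length : ℝ)| ≤ (Amax + Dmax) / (θ - 1) * θ ^ t.length := by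
              rw [h1]
              push_cast
              rw [abs_neg]
              exact hc0b
            have t4 : |a₁ * θ ^ t.length| = |a₁| * θ ^ t.length := by
              rw [abs_mul, abs_of_pos (pow_pos hθ0 _)]
            have t5 : E * ρ ^ t.length ≤ E * θ ^ t.length :=
              mul_le_mul_of_nonneg_left (hρθ _) hE0
            have t6 := tri (a₁ * θ ^ t.length) (s₁ t.length : ℝ)
            rw [t4, abs_sub_comm] at t6
            have t7 : |a₁| * θ ^ t.length ≤
                ((Amax + Dmax) / (θ - 1) + E) * θ ^ t.length := by
              nlinarith
            exact le_of_mul_le_mul_right t7 (pow_pos hθ0 _)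
          have hwin : ∀ j, j < d → s₁ (k + j) = s₂ (k + j) := by
            intro j hj
            have hidx : k + j < k + d := by omega
            have hsb : |(s₁ (k + j) : ℝ)| ≤ (N : ℝ) := by
              have q1 := h1k (k + j) (by omega)
              have t4 : |a₁ * θ ^ (k + j)| = |a₁| * θ ^ (k + j) := by
                rw [abs_mul, abs_of_pos (pow_pos hθ0 _)]
              have q2 : |(s₁ (k + j) : ℝ)| ≤ |a₁| * θ ^ (k + j) + E * ρ ^ (k + j) := by
                have := tri ((s₁ (k + j) : ℝ)) (a₁ * θ ^ (k + j))
                rw [t4] at this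
                linarith
              have q3 : ρ ^ (k + j) ≤ 1 := pow_le_one₀ hρ0.le hρ1.le
              have q4 : θ ^ (k + j) ≤ θ ^ (k + d) := pow_le_pow_right₀ hθ1.le (by omega)
              have q5 : |a₁| * θ ^ (k + j) ≤
                  ((Amax + Dmax) / (θ - 1) + E) * θ ^ (k + d) := by
                have := mul_le_mul ha₁b q4 (pow_nonneg hθ0.le _) (by linarith)
                linarith
              have q6 : E * ρ ^ (k + j) ≤ E := by
                calc E * ρ ^ (k + j) ≤ E * 1 := mul_le_mul_of_nonneg_left q3 hE0
                  _ = E := mul_one _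
              have q7 : ((Amax + Dmax) / (θ - 1) + E) * θ ^ (k + d) =
                  (Amax + Dmax) / (θ - 1) * θ ^ (k + d) + E * θ ^ (k + d) := by ring
              linarith
            have hmem1 : s₁ (k + j) ∈ Set.Icc (-N) N := by
              rw [Set.mem_Icc]
              have hb := abs_le.mp hsb
              constructor
              · exact_mod_cast hb.1
              · exact_mod_cast hb.2
            have hcond1 : s₁ ((⟨k + j, hidx⟩ : Fin (k + d)) : ℕ) ∈ Set.Icc (-N) N ∧
                ((k : ℕ) ≤ ((⟨k + j, hidx⟩ : Fin (k + d)) : ℕ) → DeepLive M k q s₁) :=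
              ⟨hmem1, fun _ => hDL⟩
            have e1 := code_pos M k d N q s₁ ⟨k + j, hidx⟩ hcond1
            have e2 := congrFun hcd (⟨k + j, hidx⟩ : Fin (k + d))
            rw [e1] at e2
            by_cases hcond2 : s₂ ((⟨k + j, hidx⟩ : Fin (k + d)) : ℕ) ∈ Set.Icc (-N) N ∧
                ((k : ℕ) ≤ ((⟨k + j, hidx⟩ : Fin (k + d)) : ℕ) → DeepLive M k q s₂)
            · rw [code_pos M k d N q s₂ _ hcond2] at e2
              exact congrArg Subtype.val (Option.some.inj e2)
            · rw [code_neg M k d N q s₂ _ hcond2] at e2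
              simp at e2
          have hdet := window_det hmonic k hsr1 hG2.1 hwin
          have := hdet t.length hmk
          omega
      constructor
      · rintro ⟨p', c', hpc, hF, h0⟩
        obtain ⟨h1, h2⟩ : p = p' ∧ c = c' := by
          simpa [Prod.ext_iff] using Option.some.inj hpc
        subst h1
        subst h2
        exact ⟨p, c, rfl, hF, key _ _ s s' hGs hGs' hcode h0⟩
      · rintro ⟨p', c', hpc, hF, h0⟩
        obtain ⟨h1, h2⟩ : p = p' ∧ c = c' := by
          simpa [Prod.ext_iff] using Option.some.inj hpc
        subst h1
        subst h2
        exact ⟨p, c, rfl, hF, key _ _ s' s hGs' hGs hcode.symm h0⟩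
    · constructor
      · rintro ⟨p', c', hpc, hF, -⟩
        obtain ⟨h1, h2⟩ : p = p' ∧ c = c' := by
          simpa [Prod.ext_iff] using Option.some.inj hpc
        subst h1
        exact absurd hF hpF
      · rintro ⟨p', c', hpc, hF, -⟩
        obtain ⟨h1, h2⟩ : p = p' ∧ c = c' := by
          simpa [Prod.ext_iff] using Option.some.inj hpc
        subst h1
        exact absurd hF hpF
end

section
/- Let φ : Σ → Σ* be a non-erasing substitution with φ(a) = a·u for some nonempty word u, such that φᵏ(u) is nonempty for all k, and let x = φ^ω(a) be its fixpoint. Then for every position k ∈ ℕ, the value computed by the addressing sequence automaton on the address of position k equals k: (π(a, rep(k)))₀ = k, where rep(k) is the (k+1)-th word (in radix order) of the language of the addressing automaton without leading zeros. -/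
/-- Apply a substitution `φ` to a word. -/
def applyW {n : ℕ} (φ : Fin n → List (Fin n)) (w : List (Fin n)) : List (Fin n) :=
  w.flatMap φ

/-- The weight `π(b, i)` of the addressing sequence automaton: the sequence of
lengths of the images under `φᵐ` of the length-`i` prefix of `φ(b)`. -/
def weightSeq {n : ℕ} (φ : Fin n → List (Fin n)) (b : Fin n) (i : ℕ) : ℕ → ℤ :=
  fun m => (((applyW φ)^[m] ((φ b).take i)).length : ℤ)

/-- One step of the addressing sequence automaton: from state `b` read the digit
`i < |φ(b)|`, go to the letter `φ(b)ᵢ` and add the weight `π(b, i)`. -/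
def addrStep {n : ℕ} (φ : Fin n → List (Fin n)) :
    Option (Fin n × (ℕ → ℤ)) → ℕ → Option (Fin n × (ℕ → ℤ))
  | none, _ => none
  | some (b, s), i =>
      if h : i < (φ b).length then some ((φ b).get ⟨i, h⟩, shift s + weightSeq φ b i)
      else none

/-- Run of the addressing sequence automaton on an address (a word of digits),
computing the reached state and the accumulated weight sequence. -/
def addrRun {n : ℕ} (φ : Fin n → List (Fin n)) (q : Fin n) (u : List ℕ) :
    Option (Fin n × (ℕ → ℤ)) :=
  u.foldl (addrStep φ) (some (q, 0))

/-- The language of the Dumont–Thomas numeration system of `φ^ω(a)`: addresses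
accepted by the addressing automaton, without leading zeros. -/
def addrLang {n : ℕ} (φ : Fin n → List (Fin n)) (a : Fin n) : Set (List ℕ) :=
  { u | (addrRun φ a u).isSome ∧ u.head? ≠ some 0 }

/-- Radix order on addresses: shorter words first, lexicographic order on words
of the same length. -/
def radixLt (u v : List ℕ) : Prop :=
  u.length < v.length ∨ (u.length = v.length ∧ List.Lex (· < ·) u v)

/-!
Reading the digit `i` from state `q` with `m` digits still to come adds
`|φᵐ(φ(q)₀⋯φ(q)_{i-1})|`, so, by induction on `m`, the addresses of length `m` read from `q`
take, increasingly in lexicographic order, exactly the values `0, 1, …, |φᵐ(q)| - 1`. From `a`,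
since `φ(a) = a·u`, a leading `0` changes nothing, while an address of length `m + 1` with nonzero
leading digit has value in `[|φᵐ(a)|, |φᵐ⁺¹(a)|)`. As `|φᵐ(a)|` is unbounded, the value is a
strictly increasing map from the language, in radix order, onto `ℕ`; so the value of `r` is the
number of its predecessors.
-/

section ImageLength

variable {n : ℕ} (φ : Fin n → List (Fin n))

def imageLength (m : ℕ) (w : List (Fin n)) : ℕ := ((applyW φ)^[m] w).length

lemma applyW_iterate_append (m : ℕ) (v w : List (Fin n)) :
    (applyW φ)^[m] (v ++ w) = (applyW φ)^[m] v ++ (applyW φ)^[m] w := by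
  induction m generalizing v w with
  | zero => rfl
  | succ m ih => simp only [Function.iterate_succ_apply, applyW, List.flatMap_append, ih]

lemma imageLength_append (m : ℕ) (v w : List (Fin n)) :
    imageLength φ m (v ++ w) = imageLength φ m v + imageLength φ m w := by
  simp only [imageLength, applyW_iterate_append, List.length_append]

lemma imageLength_nil (m : ℕ) : imageLength φ m [] = 0 := by
  simp [imageLength, Function.iterate_fixed (show applyW φ [] = [] from rfl)]

lemma imageLength_succ_singleton (m : ℕ) (b : Fin n) :
    imageLength φ (m + 1) [b] = imageLength φ m (φ b) := by
  simp [imageLength, Function.iterate_succ_apply, applyW]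

lemma imageLength_mono_of_prefix (m : ℕ) {v w : List (Fin n)} (h : v <+: w) :
    imageLength φ m v ≤ imageLength φ m w := by
  obtain ⟨t, rfl⟩ := h
  rw [imageLength_append]
  exact Nat.le_add_right _ _

lemma imageLength_take_succ (m : ℕ) (w : List (Fin n)) {i : ℕ} (hi : i < w.length) :
    imageLength φ m (w.take (i + 1)) = imageLength φ m (w.take i) + imageLength φ m [w[i]] := by
  rw [List.take_add_one, List.getElem?_eq_getElem hi, Option.toList_some, imageLength_append]

end ImageLength

section AddrValue

variable {n : ℕ} (φ : Fin n → List (Fin n))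

/-- The `0`-th coordinate of the weight of an address read from `q`: a digit `i` followed by
`v` contributes `π(q, i)` shifted `|v|` times, that is `|φ^{|v|}(φ(q)₀⋯φ(q)_{i-1})|`. -/
def addrValue : Fin n → List ℕ → Option ℕ
  | _, [] => some 0
  | q, i :: v =>
      if h : i < (φ q).length then
        (addrValue (φ q)[i] v).map (imageLength φ v.length ((φ q).take i) + ·)
      else none

lemma addrValue_cons_eq_some {q : Fin n} {i : ℕ} {v : List ℕ} {x : ℕ} :
    addrValue φ q (i :: v) = some x ↔ ∃ (hi : i < (φ q).length) (y : ℕ),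
      addrValue φ (φ q)[i] v = some y ∧ x = imageLength φ v.length ((φ q).take i) + y := by
  rw [addrValue]
  split_ifs with hi
  · simp only [Option.map_eq_some_iff, exists_true_left, hi, eq_comm (a := x)]
  · simp [hi]

lemma foldl_addrStep_none (v : List ℕ) : v.foldl (addrStep φ) none = none := by
  induction v with
  | nil => rfl
  | cons i v ih => exact ih

lemma foldl_addrStep_map_value (v : List ℕ) (q : Fin n) (s₀ : ℕ → ℤ) :
    (v.foldl (addrStep φ) (some (q, s₀))).map (fun ps => ps.2 0) =
      (addrValue φ q v).map (fun x : ℕ => s₀ v.length + x) := by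
  induction v generalizing q s₀ with
  | nil => simp [addrValue]
  | cons i v ih =>
    rw [List.foldl_cons, addrValue]
    by_cases hi : i < (φ q).length
    · simp only [addrStep, hi, dite_true, ih, Option.map_map, List.get_eq_getElem]
      congr 1
      funext x
      simp [shift, weightSeq, imageLength, add_assoc]
    · simp [addrStep, hi, foldl_addrStep_none]

lemma addrRun_map_value (q : Fin n) (v : List ℕ) :
    (addrRun φ q v).map (fun ps => ps.2 0) = (addrValue φ q v).map ((↑) : ℕ → ℤ) := by
  rw [addrRun, foldl_addrStep_map_value]
  simp

lemma addrValue_lt {q : Fin n} {v : List ℕ} {x : ℕ} (h : addrValue φ q v = some x) :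
    x < imageLength φ v.length [q] := by
  induction v generalizing q x with
  | nil =>
    obtain rfl : 0 = x := by simpa [addrValue] using h
    simp [imageLength]
  | cons i v ih =>
    obtain ⟨hi, y, hy, rfl⟩ := (addrValue_cons_eq_some φ).1 h
    calc imageLength φ v.length ((φ q).take i) + y
        < imageLength φ v.length ((φ q).take i) + imageLength φ v.length [(φ q)[i]] :=
          Nat.add_lt_add_left (ih hy) _
      _ = imageLength φ v.length ((φ q).take (i + 1)) := (imageLength_take_succ φ _ _ hi).symm
      _ ≤ imageLength φ v.length (φ q) :=
          imageLength_mono_of_prefix φ _ (List.take_prefix _ _)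
      _ = imageLength φ (i :: v).length [q] := (imageLength_succ_singleton φ _ q).symm

lemma addrValue_lt_of_lex {v w : List ℕ} (hlex : List.Lex (· < ·) v w)
    (hlen : v.length = w.length) {q : Fin n} {x y : ℕ}
    (hv : addrValue φ q v = some x) (hw : addrValue φ q w = some y) : x < y := by
  induction hlex generalizing q x y with
  | nil => simp at hlen
  | @rel i v j w hij =>
    obtain ⟨hi, x', hx', rfl⟩ := (addrValue_cons_eq_some φ).1 hv
    obtain ⟨_, y', -, rfl⟩ := (addrValue_cons_eq_some φ).1 hw
    have hvw : v.length = w.length := by simpa using hlen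
    calc imageLength φ v.length ((φ q).take i) + x'
        < imageLength φ v.length ((φ q).take i) + imageLength φ v.length [(φ q)[i]] :=
          Nat.add_lt_add_left (addrValue_lt φ hx') _
      _ = imageLength φ v.length ((φ q).take (i + 1)) := (imageLength_take_succ φ _ _ hi).symm
      _ ≤ imageLength φ w.length ((φ q).take j) :=
          hvw ▸ imageLength_mono_of_prefix φ _ (List.take_prefix_take_left hij)
      _ ≤ imageLength φ w.length ((φ q).take j) + y' := Nat.le_add_right _ _
  | @cons i v w _ ih =>
    obtain ⟨hi, x', hx', rfl⟩ := (addrValue_cons_eq_some φ).1 hv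
    obtain ⟨_, y', hy', rfl⟩ := (addrValue_cons_eq_some φ).1 hw
    have hvw : v.length = w.length := by simpa using hlen
    rw [hvw]
    exact Nat.add_lt_add_left (ih hvw hx' hy') _

lemma Nat.exists_le_lt_succ_of_lt (T : ℕ → ℕ) {N k : ℕ} (h₀ : T 0 ≤ k) (hN : k < T N) :
    ∃ i < N, T i ≤ k ∧ k < T (i + 1) := by
  induction N with
  | zero => omega
  | succ N ih =>
    by_cases hk : T N ≤ k
    · exact ⟨N, N.lt_succ_self, hk, hN⟩
    · obtain ⟨i, hi, h⟩ := ih (not_le.1 hk)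
      exact ⟨i, hi.trans N.lt_succ_self, h⟩

lemma exists_addrValue_eq (m : ℕ) {q : Fin n} {k : ℕ} (hk : k < imageLength φ m [q]) :
    ∃ v : List ℕ, v.length = m ∧ addrValue φ q v = some k := by
  induction m generalizing q k with
  | zero =>
    obtain rfl : k = 0 := by simpa [imageLength] using hk
    exact ⟨[], rfl, rfl⟩
  | succ m ih =>
    rw [imageLength_succ_singleton, ← List.take_length (l := φ q)] at hk
    obtain ⟨i, hi, hle, hlt⟩ := Nat.exists_le_lt_succ_of_lt
      (fun i => imageLength φ m ((φ q).take i)) (by simp [imageLength_nil]) hk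
    rw [imageLength_take_succ φ _ _ hi] at hlt
    obtain ⟨v, rfl, hv⟩ := ih (q := (φ q)[i]) (k := k - imageLength φ m ((φ q).take i)) (by omega)
    exact ⟨i :: v, rfl, (addrValue_cons_eq_some φ).2 ⟨hi, _, hv, by omega⟩⟩

end AddrValue

lemma mem_addrLang_iff {n : ℕ} {φ : Fin n → List (Fin n)} {a : Fin n} {v : List ℕ} :
    v ∈ addrLang φ a ↔ (addrValue φ a v).isSome ∧ v.head? ≠ some 0 := by
  change (addrRun φ a v).isSome ∧ _ ↔ _
  rw [← Option.isSome_map (f := fun ps => ps.2 0), addrRun_map_value, Option.isSome_map]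

section FixedLetter

variable {n : ℕ} (φ : Fin n → List (Fin n)) {a : Fin n} {u : List (Fin n)}

lemma imageLength_succ_of_eq_cons (hfix : φ a = a :: u) (m : ℕ) :
    imageLength φ (m + 1) [a] = imageLength φ m [a] + imageLength φ m u := by
  rw [imageLength_succ_singleton, hfix, ← imageLength_append, List.singleton_append]

lemma monotone_imageLength_of_eq_cons (hfix : φ a = a :: u) :
    Monotone (fun m => imageLength φ m [a]) :=
  monotone_nat_of_le_succ fun m => by
    simp only [imageLength_succ_of_eq_cons φ hfix, Nat.le_add_right]

lemma lt_imageLength_of_eq_cons (hfix : φ a = a :: u) (hu : ∀ m, (applyW φ)^[m] u ≠ [])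
    (m : ℕ) : m < imageLength φ m [a] := by
  induction m with
  | zero => simp [imageLength]
  | succ m ih =>
    have : 0 < imageLength φ m u := List.length_pos_iff.2 (hu m)
    rw [imageLength_succ_of_eq_cons φ hfix]
    omega

-- Reading `0` from `a` loops back to `a` with weight `0`.
lemma addrValue_zero_cons_of_eq_cons (hfix : φ a = a :: u) (t : List ℕ) :
    addrValue φ a (0 :: t) = addrValue φ a t := by
  simp [addrValue, hfix, imageLength_nil]

lemma le_addrValue_cons_of_eq_cons (hfix : φ a = a :: u) {i : ℕ} (hi : i ≠ 0) {t : List ℕ}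
    {x : ℕ} (h : addrValue φ a (i :: t) = some x) : imageLength φ t.length [a] ≤ x := by
  obtain ⟨_, y, -, rfl⟩ := (addrValue_cons_eq_some φ).1 h
  have : [a] <+: (φ a).take i := by
    simpa [hfix] using List.take_prefix_take_left (l := φ a) (Nat.one_le_iff_ne_zero.2 hi)
  exact (imageLength_mono_of_prefix φ _ this).trans (Nat.le_add_right _ _)

lemma addrValue_lt_of_radixLt (hfix : φ a = a :: u) {v w : List ℕ} (hw₀ : w.head? ≠ some 0)
    (hvw : radixLt v w) {x y : ℕ} (hv : addrValue φ a v = some x)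
    (hw : addrValue φ a w = some y) : x < y := by
  rcases hvw with hlen | ⟨hlen, hlex⟩
  · obtain ⟨i, t, rfl⟩ := List.exists_cons_of_length_pos (Nat.zero_lt_of_lt hlen)
    calc x < imageLength φ v.length [a] := addrValue_lt φ hv
      _ ≤ imageLength φ t.length [a] :=
          monotone_imageLength_of_eq_cons φ hfix (by simpa [Nat.lt_succ_iff] using hlen)
      _ ≤ y := le_addrValue_cons_of_eq_cons φ hfix (by simpa using hw₀) hw
  · exact addrValue_lt_of_lex φ hlex hlen hv hw

lemma exists_mem_addrLang_addrValue_eq (hfix : φ a = a :: u) (hu : ∀ m, (applyW φ)^[m] u ≠ [])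
    (k : ℕ) : ∃ v ∈ addrLang φ a, addrValue φ a v = some k := by
  rcases Nat.eq_zero_or_pos k with rfl | hk
  · exact ⟨[], mem_addrLang_iff.2 ⟨rfl, by simp⟩, rfl⟩
  obtain ⟨m, -, hle, hlt⟩ := Nat.exists_le_lt_succ_of_lt (fun m => imageLength φ m [a])
    (by simpa [imageLength] using Nat.succ_le_of_lt hk) (lt_imageLength_of_eq_cons φ hfix hu k)
  obtain ⟨_ | ⟨i, t⟩, hlen, hv⟩ := exists_addrValue_eq φ (m + 1) hlt
  · simp at hlen
  have hi : i ≠ 0 := by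
    rintro rfl
    rw [addrValue_zero_cons_of_eq_cons φ hfix] at hv
    obtain rfl : t.length = m := by simpa using hlen
    exact (addrValue_lt φ hv).not_ge hle
  exact ⟨i :: t, mem_addrLang_iff.2 ⟨by simp [hv], by simpa using hi⟩, hv⟩

end FixedLetter

lemma radixLt_trichotomous (v w : List ℕ) : radixLt v w ∨ v = w ∨ radixLt w v := by
  rcases lt_trichotomy v.length w.length with h | h | h
  · exact Or.inl (Or.inl h)
  · rcases Std.Trichotomous.rel_or_eq_or_rel_swap (r := List.Lex (· < ·)) (a := v) (b := w)
      with hl | rfl | hl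
    · exact Or.inl (Or.inr ⟨h, hl⟩)
    · exact Or.inr (Or.inl rfl)
    · exact Or.inr (Or.inr (Or.inr ⟨h.symm, hl⟩))
  · exact Or.inr (Or.inr (Or.inl h))

lemma ncard_setOf_rel_eq {α : Type*} {S : Set α} {r : α → α → Prop} (f : α → ℕ)
    (htri : ∀ v ∈ S, ∀ w ∈ S, r v w ∨ v = w ∨ r w v)
    (hmono : ∀ v ∈ S, ∀ w ∈ S, r v w → f v < f w) (hsurj : ∀ k, ∃ v ∈ S, f v = k)
    {w : α} (hw : w ∈ S) : {v | v ∈ S ∧ r v w}.ncard = f w := by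
  have hinj : Set.InjOn f {v | v ∈ S ∧ r v w} := by
    rintro v ⟨hv, -⟩ v' ⟨hv', -⟩ hvv'
    rcases htri v hv v' hv' with h | h | h
    · exact absurd hvv' (hmono v hv v' hv' h).ne
    · exact h
    · exact absurd hvv' (hmono v' hv' v hv h).ne'
  have himage : f '' {v | v ∈ S ∧ r v w} = Set.Iio (f w) := by
    ext k
    constructor
    · rintro ⟨v, ⟨hv, hvw⟩, rfl⟩
      exact hmono v hv w hw hvw
    · intro hk
      obtain ⟨v, hv, rfl⟩ := hsurj k
      refine ⟨v, ⟨hv, ?_⟩, rfl⟩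
      rcases htri v hv w hw with h | rfl | h
      · exact h
      · exact (lt_irrefl _ (Set.mem_Iio.1 hk)).elim
      · exact absurd (hmono w hw v hv h) (not_lt.2 (le_of_lt hk))
  rw [← hinj.ncard_image, himage, Set.ncard_Iio_nat]

theorem addrRun_value_eq_position_general {n : ℕ} (φ : Fin n → List (Fin n)) (a : Fin n)
    (u : List (Fin n)) (hfix : φ a = a :: u)
    (hk : ∀ k : ℕ, (applyW φ)^[k] u ≠ []) :
    ∀ (k : ℕ) (r : List ℕ), r ∈ addrLang φ a →
      { v | v ∈ addrLang φ a ∧ radixLt v r }.ncard = k →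
      ∃ (q : Fin n) (s : ℕ → ℤ), addrRun φ a r = some (q, s) ∧ s 0 = (k : ℤ) := by
  intro k r hr hcard
  obtain ⟨⟨q, s⟩, hrun⟩ := Option.isSome_iff_exists.1 hr.1
  obtain ⟨x, hx⟩ := Option.isSome_iff_exists.1 (mem_addrLang_iff.1 hr).1
  have hs : s 0 = x := by simpa [hrun, hx] using addrRun_map_value φ a r
  have hvalue (v) (hv : v ∈ addrLang φ a) : addrValue φ a v = some ((addrValue φ a v).getD 0) := by
    obtain ⟨y, hy⟩ := Option.isSome_iff_exists.1 (mem_addrLang_iff.1 hv).1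
    rw [hy]
    rfl
  have hcount := ncard_setOf_rel_eq (fun v => (addrValue φ a v).getD 0)
    (fun v _ w _ => radixLt_trichotomous v w)
    (fun v hv w hw hvw => addrValue_lt_of_radixLt φ hfix hw.2 hvw (hvalue v hv) (hvalue w hw))
    (fun k => by
      obtain ⟨v, hv, hvk⟩ := exists_mem_addrLang_addrValue_eq φ hfix hk k
      exact ⟨v, hv, by simp [hvk]⟩) hr
  refine ⟨q, s, hrun, ?_⟩
  rw [hs, ← hcard, hcount, hx]
  rfl

/-- for a non-erasing substitution `φ` with fixpoint `φ^ω(a)`,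
the value computed by the addressing sequence automaton on the `(k+1)`-th word
(in radix order) of the language without leading zeros equals `k`. -/
theorem addrRun_value_eq_position {n : ℕ} (φ : Fin n → List (Fin n)) (a : Fin n)
    (hne : ∀ b, φ b ≠ []) (u : List (Fin n)) (hu : u ≠ []) (hfix : φ a = a :: u)
    (hk : ∀ k : ℕ, (applyW φ)^[k] u ≠ []) :
    ∀ (k : ℕ) (r : List ℕ), r ∈ addrLang φ a →
      { v | v ∈ addrLang φ a ∧ radixLt v r }.ncard = k →
      ∃ (q : Fin n) (s : ℕ → ℤ), addrRun φ a r = some (q, s) ∧ s 0 = (k : ℤ) :=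
  addrRun_value_eq_position_general φ a u hfix hk
end

section
/- Dumont–Thomas theorem: Let φ be a non-erasing substitution with fixpoint x = φ^ω(a) (where φ(a) = a·u, u nonempty, φᵏ(u) nonempty for all k). Then every nonempty prefix p of x admits a unique representation p = ∏_{i=0}^{k} φ^{k-i}(pᵢ) where (pᵢ, aᵢ)_{i=0}^{k} ∈ (Σ* × Σ)^{k+1} satisfies: p₀a₀ is a prefix of φ(a) with p₀ nonempty, and p_{i+1}a_{i+1} is a prefix of φ(aᵢ) for all i < k. -/
/-- `DTRep φ a p l` states that the sequence `l = (p₀,a₀) … (p_k,a_k)` is a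
Dumont–Thomas representation of the word `p`: `p₀a₀` is a prefix of `φ(a)` with
`p₀` nonempty, `p_{i+1}a_{i+1}` is a prefix of `φ(aᵢ)` for all `i < k`, and
`p = ∏_{i=0}^{k} φ^{k-i}(pᵢ)`. -/
def DTRep {n : ℕ} (φ : Fin n → List (Fin n)) (a : Fin n) (p : List (Fin n))
    (l : List (List (Fin n) × Fin n)) : Prop :=
  (∃ h t, l = h :: t ∧ h.1 ≠ [] ∧ (h.1 ++ [h.2]) <+: φ a) ∧
  List.Chain' (fun x y => (y.1 ++ [y.2]) <+: φ x.2) l ∧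
  p = (l.mapIdx fun i x => (applyW φ)^[l.length - 1 - i] x.1).flatten

namespace DTaux

variable {n : ℕ} (φ : Fin n → List (Fin n))

lemma applyW_append (s t : List (Fin n)) :
    applyW φ (s ++ t) = applyW φ s ++ applyW φ t :=
  List.flatMap_append

lemma applyW_singleton (b : Fin n) : applyW φ [b] = φ b := by simp [applyW]

lemma applyW_iter_append (k : ℕ) (s t : List (Fin n)) :
    (applyW φ)^[k] (s ++ t) = (applyW φ)^[k] s ++ (applyW φ)^[k] t := by
  induction k generalizing s t with
  | zero => rfl
  | succ k ih => simp only [Function.iterate_succ_apply, applyW_append, ih]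

lemma applyW_prefix {s t : List (Fin n)} (h : s <+: t) :
    applyW φ s <+: applyW φ t := by
  obtain ⟨d, rfl⟩ := h
  exact ⟨applyW φ d, (applyW_append φ s d).symm⟩

lemma applyW_length (hne : ∀ b, φ b ≠ []) (s : List (Fin n)) :
    s.length ≤ (applyW φ s).length := by
  induction s with
  | nil => simp [applyW]
  | cons x t ih =>
    have h1 : 0 < (φ x).length := List.length_pos_iff.mpr (hne x)
    have : applyW φ (x :: t) = φ x ++ applyW φ t := List.flatMap_cons
    rw [this, List.length_append, List.length_cons]
    omega

/-- The word represented by a list of pairs, via a left fold. -/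
def word (l : List (List (Fin n) × Fin n)) : List (Fin n) :=
  l.foldl (fun acc y => applyW φ acc ++ y.1) []

lemma foldl_word (init : List (Fin n)) (l : List (List (Fin n) × Fin n)) :
    l.foldl (fun acc y => applyW φ acc ++ y.1) init
      = (applyW φ)^[l.length] init ++ word φ l := by
  induction l generalizing init with
  | nil => simp [word]
  | cons y t ih =>
    show t.foldl _ (applyW φ init ++ y.1) = _
    rw [ih]
    have hw : word φ (y :: t) = (applyW φ)^[t.length] y.1 ++ word φ t := by
      show t.foldl _ (applyW φ [] ++ y.1) = _
      have : applyW φ [] ++ y.1 = y.1 := by simp [applyW]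
      rw [this, ih]
    rw [hw, applyW_iter_append, List.length_cons, Function.iterate_succ_apply,
      List.append_assoc]

lemma word_cons (y : List (Fin n) × Fin n) (t : List (List (Fin n) × Fin n)) :
    word φ (y :: t) = (applyW φ)^[t.length] y.1 ++ word φ t := by
  show t.foldl _ (applyW φ [] ++ y.1) = _
  have : applyW φ [] ++ y.1 = y.1 := by simp [applyW]
  rw [this, foldl_word]

lemma word_concat (l : List (List (Fin n) × Fin n)) (y : List (Fin n) × Fin n) :
    word φ (l ++ [y]) = applyW φ (word φ l) ++ y.1 := by
  unfold word
  rw [List.foldl_append]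
  rfl

lemma word_eq (l : List (List (Fin n) × Fin n)) :
    (l.mapIdx fun i x => (applyW φ)^[l.length - 1 - i] x.1).flatten = word φ l := by
  induction l with
  | nil => rfl
  | cons y t ih =>
    rw [List.mapIdx_cons, List.flatten_cons, word_cons, ← ih]
    have h1 : (fun (i : ℕ) (x : List (Fin n) × Fin n) =>
        (applyW φ)^[(y :: t).length - 1 - (i + 1)] x.1)
        = fun i x => (applyW φ)^[t.length - 1 - i] x.1 := by
      funext i x
      have he : (y :: t).length - 1 - (i + 1) = t.length - 1 - i := by
        simp only [List.length_cons]; omega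
      rw [he]
    have h2 : (y :: t).length - 1 - 0 = t.length := by simp
    rw [h2, h1]

lemma dtrep_iff (a : Fin n) (p : List (Fin n)) (l : List (List (Fin n) × Fin n)) :
    DTRep φ a p l ↔
      (∃ h t, l = h :: t ∧ h.1 ≠ [] ∧ (h.1 ++ [h.2]) <+: φ a) ∧
      List.Chain' (fun x y => (y.1 ++ [y.2]) <+: φ x.2) l ∧
      p = word φ l := by
  unfold DTRep
  rw [word_eq]

lemma dtrep_singleton (a : Fin n) (p : List (Fin n)) (y : List (Fin n) × Fin n) :
    DTRep φ a p [y] ↔ y.1 ≠ [] ∧ (y.1 ++ [y.2]) <+: φ a ∧ p = y.1 := by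
  rw [dtrep_iff]
  constructor
  · rintro ⟨⟨h, t, het, h1, h2⟩, -, hw⟩
    injection het with e1 e2
    subst e1; subst e2
    refine ⟨h1, h2, ?_⟩
    rw [hw, word_cons]
    simp [word]
  · rintro ⟨h1, h2, rfl⟩
    refine ⟨⟨y, [], rfl, h1, h2⟩, List.isChain_singleton y, ?_⟩
    rw [word_cons]
    simp [word]

lemma dtrep_concat (a : Fin n) (p : List (Fin n)) {l : List (List (Fin n) × Fin n)}
    (hl : l ≠ []) (y : List (Fin n) × Fin n) :
    DTRep φ a p (l ++ [y]) ↔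
      DTRep φ a (word φ l) l ∧ ((y.1 ++ [y.2]) <+: φ (l.getLast hl).2) ∧
        p = applyW φ (word φ l) ++ y.1 := by
  obtain ⟨h0, t0, rfl⟩ := List.exists_cons_of_ne_nil hl
  rw [dtrep_iff, dtrep_iff]
  constructor
  · rintro ⟨⟨h, t, het, h1, h2⟩, hch, hw⟩
    have hcons : (h0 :: t0) ++ [y] = h0 :: (t0 ++ [y]) := rfl
    rw [hcons] at het
    injection het with e1 e2
    subst e1; subst e2
    rw [List.Chain', List.isChain_append] at hch
    obtain ⟨hch1, -, hch3⟩ := hch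
    refine ⟨⟨⟨h0, t0, rfl, h1, h2⟩, hch1, rfl⟩, ?_, ?_⟩
    · exact hch3 _ (by rw [List.getLast?_eq_getLast hl]; rfl) y rfl
    · rw [hw, word_concat]
  · rintro ⟨⟨⟨h, t, het, h1, h2⟩, hch, -⟩, hrel, hw⟩
    injection het with e1 e2
    subst e1; subst e2
    refine ⟨⟨h0, t0 ++ [y], rfl, h1, h2⟩, ?_, ?_⟩
    · rw [List.Chain', List.isChain_append]
      refine ⟨hch, List.isChain_singleton y, ?_⟩
      intro x hx z hz
      rw [List.getLast?_eq_getLast hl, Option.mem_def, Option.some.injEq] at hx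
      simp only [List.head?_cons, Option.mem_def, Option.some.injEq] at hz
      subst hx; subst hz
      exact hrel
    · rw [hw, word_concat]

end DTaux
namespace DTaux

variable {n : ℕ} {φ : Fin n → List (Fin n)} {a : Fin n} {u : List (Fin n)}

lemma X_succ (hfix : φ a = a :: u) (m : ℕ) :
    (applyW φ)^[m+1] [a] = (applyW φ)^[m] [a] ++ (applyW φ)^[m] u := by
  rw [Function.iterate_succ_apply]
  have h : applyW φ [a] = [a] ++ u := by rw [applyW_singleton, hfix]; rfl
  rw [h, applyW_iter_append]

lemma X_mono (hfix : φ a = a :: u) {m m' : ℕ} (h : m ≤ m') :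
    (applyW φ)^[m] [a] <+: (applyW φ)^[m'] [a] := by
  induction m' with
  | zero =>
    rw [Nat.le_zero] at h
    subst h
    exact List.prefix_refl _
  | succ k ih =>
    rcases Nat.lt_or_ge m (k+1) with hlt | hge
    · refine (ih (by omega)).trans ?_
      rw [X_succ hfix]
      exact List.prefix_append _ _
    · have : m = k + 1 := by omega
      subst this
      exact List.prefix_refl _

lemma X_length (hfix : φ a = a :: u) (hk : ∀ k : ℕ, (applyW φ)^[k] u ≠ []) (m : ℕ) :
    m < ((applyW φ)^[m] [a]).length := by
  induction m with
  | zero => simp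
  | succ k ih =>
    rw [X_succ hfix, List.length_append]
    have : 0 < ((applyW φ)^[k] u).length := List.length_pos_iff.mpr (hk k)
    omega

lemma prefix_of_X (hfix : φ a = a :: u) {p q : List (Fin n)} {m m' : ℕ}
    (hp : p <+: (applyW φ)^[m] [a]) (hq : q <+: (applyW φ)^[m'] [a])
    (hlen : p.length ≤ q.length) : p <+: q := by
  have hp' : p <+: (applyW φ)^[max m m'] [a] := hp.trans (X_mono hfix (le_max_left _ _))
  have hq' : q <+: (applyW φ)^[max m m'] [a] := hq.trans (X_mono hfix (le_max_right _ _))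
  exact List.prefix_of_prefix_length_le hp' hq' hlen

lemma X_head (hfix : φ a = a :: u) (m : ℕ) :
    ∃ r, (applyW φ)^[m] [a] = a :: r := by
  have h : [a] <+: (applyW φ)^[m] [a] := X_mono hfix (Nat.zero_le m)
  obtain ⟨r, hr⟩ := h
  exact ⟨r, by rw [← hr]; rfl⟩

lemma head_a (hfix : φ a = a :: u) {q : List (Fin n)} {m : ℕ}
    (hq : q <+: (applyW φ)^[m] [a]) (hne : q ≠ []) : ∃ t, q = a :: t := by
  obtain ⟨r, hr⟩ := X_head hfix m
  obtain ⟨d, hd⟩ := hq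
  cases q with
  | nil => exact absurd rfl hne
  | cons x t =>
    rw [hr, List.cons_append] at hd
    injection hd with e1 _
    exact ⟨t, by rw [e1]⟩

lemma applyW_gt (hne : ∀ b, φ b ≠ []) (hfix : φ a = a :: u) (hu : u ≠ [])
    {q t : List (Fin n)} (hq : q = a :: t) : q.length < (applyW φ q).length := by
  subst hq
  rw [show applyW φ (a :: t) = φ a ++ applyW φ t from List.flatMap_cons, hfix]
  have h1 := applyW_length φ hne t
  have h2 : 0 < u.length := List.length_pos_iff.mpr hu
  simp only [List.length_append, List.length_cons]
  omega

lemma prefix_snoc {α : Type*} {s t : List α} (h : s <+: t) (hl : s.length < t.length) :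
    s ++ [t[s.length]'hl] <+: t := by
  have h1 : t.take (s.length + 1) = t.take s.length ++ [t[s.length]'hl] := by
    rw [List.take_succ, List.getElem?_eq_getElem hl]
    rfl
  have h2 : t.take s.length = s := (List.prefix_iff_eq_take.mp h).symm
  rw [h2] at h1
  rw [← h1]
  exact List.take_prefix _ _

lemma snoc_prefix_unique {α : Type*} {s t : List α} {c c' : α}
    (h : s ++ [c] <+: t) (h' : s ++ [c'] <+: t) : c = c' := by
  have e1 : s ++ [c] = t.take (s.length + 1) := by
    have := List.prefix_iff_eq_take.mp h
    simpa using this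
  have e2 : s ++ [c'] = t.take (s.length + 1) := by
    have := List.prefix_iff_eq_take.mp h'
    simpa using this
  have e3 : s ++ [c] = s ++ [c'] := e1.trans e2.symm
  have e4 := List.append_cancel_left e3
  injection e4

lemma snoc_X_unique (hfix : φ a = a :: u) {q : List (Fin n)} {c c' : Fin n} {m m' : ℕ}
    (h : q ++ [c] <+: (applyW φ)^[m] [a]) (h' : q ++ [c'] <+: (applyW φ)^[m'] [a]) :
    c = c' := by
  have h1 : q ++ [c] <+: q ++ [c'] := prefix_of_X hfix h h' (by simp)
  have h2 := h1.eq_of_length (by simp)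
  have h3 := List.append_cancel_left h2
  injection h3

lemma rep_spec (hne : ∀ b, φ b ≠ []) (hfix : φ a = a :: u) :
    ∀ {l : List (List (Fin n) × Fin n)} {p : List (Fin n)}, DTRep φ a p l →
      ∃ hl : l ≠ [], p ≠ [] ∧ ∃ m, p ++ [(l.getLast hl).2] <+: (applyW φ)^[m] [a] := by
  intro l
  induction l using List.reverseRecOn with
  | nil =>
    intro p hp
    obtain ⟨⟨h, t, het, -, -⟩, -, -⟩ := hp
    exact absurd het (by simp)
  | append_singleton L y ih =>
    intro p hp
    rcases eq_or_ne L [] with rfl | hL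
    · rw [show ([] : List (List (Fin n) × Fin n)) ++ [y] = [y] from rfl,
        dtrep_singleton] at hp
      obtain ⟨h1, h2, rfl⟩ := hp
      refine ⟨by simp, h1, 1, ?_⟩
      have hX1 : (applyW φ)^[1] [a] = φ a := by
        rw [Function.iterate_one, applyW_singleton]
      rw [hX1]
      simpa using h2
    · rw [dtrep_concat φ a p hL y] at hp
      obtain ⟨hL1, hrel, hw⟩ := hp
      obtain ⟨hl0, hq_ne, m, hpm⟩ := ih hL1
      refine ⟨by simp, ?_, m + 1, ?_⟩
      · rw [hw]
        have h1 : 0 < (word φ L).length := List.length_pos_iff.mpr hq_ne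
        have h2 := applyW_length φ hne (word φ L)
        intro hcon
        obtain ⟨ha, -⟩ := List.append_eq_nil_iff.mp hcon
        rw [ha, List.length_nil, Nat.le_zero, List.length_eq_zero_iff] at h2
        exact hq_ne h2
      · have hXa : (applyW φ)^[m+1] [a] = applyW φ ((applyW φ)^[m] [a]) :=
          Function.iterate_succ_apply' _ _ _
        have h3 : applyW φ (word φ L ++ [(L.getLast hl0).2]) <+: (applyW φ)^[m+1] [a] := by
          rw [hXa]
          exact applyW_prefix φ hpm
        rw [applyW_append, applyW_singleton] at h3
        have h5 : applyW φ (word φ L) ++ (y.1 ++ [y.2]) <+: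
            applyW φ (word φ L) ++ φ (L.getLast hl0).2 := by
          rw [List.prefix_append_right_inj]
          exact hrel
        have h6 := h5.trans h3
        rw [hw, List.getLast_concat, List.append_assoc]
        exact h6

lemma no_overlap (hfix : φ a = a :: u) {q q' r r' : List (Fin n)} {c : Fin n} {m m' : ℕ}
    (hq : q ++ [c] <+: (applyW φ)^[m] [a]) (hq' : q' <+: (applyW φ)^[m'] [a])
    (hlt : q.length < q'.length)
    (heq : applyW φ q ++ r = applyW φ q' ++ r')
    (hr : r.length < (φ c).length) : False := by
  have h1 : q ++ [c] <+: q' := prefix_of_X hfix hq hq' (by simp; omega)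
  obtain ⟨d, hd⟩ := h1
  have h2 : applyW φ q' = applyW φ q ++ (φ c ++ applyW φ d) := by
    rw [← hd, applyW_append, applyW_append, applyW_singleton, List.append_assoc]
  rw [h2, List.append_assoc] at heq
  have h3 := List.append_cancel_left heq
  have h4 := congrArg List.length h3
  simp only [List.length_append] at h4
  omega

end DTaux
open DTaux

/-- Dumont–Thomas: every nonempty prefix of the fixpoint
`φ^ω(a)` of a non-erasing substitution admits a unique Dumont–Thomas
representation. -/
theorem dumont_thomas {n : ℕ} (φ : Fin n → List (Fin n)) (a : Fin n)
    (hne : ∀ b, φ b ≠ []) (u : List (Fin n)) (hu : u ≠ []) (hfix : φ a = a :: u)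
    (hk : ∀ k : ℕ, (applyW φ)^[k] u ≠ []) :
    ∀ p : List (Fin n), p ≠ [] → (∃ m : ℕ, p <+: (applyW φ)^[m] [a]) →
      ∃! l : List (List (Fin n) × Fin n), DTRep φ a p l := by
  suffices H : ∀ N : ℕ, ∀ p : List (Fin n), p.length ≤ N → p ≠ [] →
      (∃ m : ℕ, p <+: (applyW φ)^[m] [a]) →
      ∃! l : List (List (Fin n) × Fin n), DTRep φ a p l by
    intro p hp hpre
    exact H p.length p le_rfl hp hpre
  intro N
  induction N with
  | zero =>
    intro p hlen hp _
    cases p with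
    | nil => exact absurd rfl hp
    | cons x t => simp at hlen
  | succ N ih =>
    rintro p hlen hp ⟨m₀, hpre⟩
    by_cases hcase : p.length < (φ a).length
    ------------------------------------------------------------------
    -- Case A : p is a proper prefix of φ a, length-1 representation
    ------------------------------------------------------------------
    · have hX1 : (applyW φ)^[1] [a] = φ a := by
        rw [Function.iterate_one, applyW_singleton]
      have hφaX : φ a <+: (applyW φ)^[1] [a] := by rw [hX1]
      have hpa : p <+: φ a := prefix_of_X hfix hpre hφaX hcase.le
      have hsnoc : p ++ [(φ a)[p.length]'hcase] <+: φ a := prefix_snoc hpa hcase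
      refine ⟨[(p, (φ a)[p.length]'hcase)], ?_, ?_⟩
      · show DTRep φ a p [(p, (φ a)[p.length]'hcase)]
        rw [dtrep_singleton]
        exact ⟨hp, hsnoc, rfl⟩
      · intro l' hl'
        rcases List.eq_nil_or_concat l' with rfl | ⟨L, y, rfl⟩
        · obtain ⟨⟨h, t, het, -, -⟩, -, -⟩ := hl'
          simp at het
        · rw [List.concat_eq_append] at hl' ⊢
          rcases eq_or_ne L [] with rfl | hL
          · rw [show ([] : List (List (Fin n) × Fin n)) ++ [y] = [y] from rfl,
              dtrep_singleton] at hl'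
            obtain ⟨-, h2, he⟩ := hl'
            obtain ⟨y1, y2⟩ := y
            simp only at he h2
            have hy2 : y2 = (φ a)[p.length]'hcase := by
              refine snoc_prefix_unique (s := p) ?_ hsnoc
              rw [he]
              exact h2
            rw [List.nil_append, hy2, ← he]
          · exfalso
            rw [dtrep_concat φ a p hL y] at hl'
            obtain ⟨hL1, hrel, hw⟩ := hl'
            obtain ⟨hl0, hq_ne, m, hqm⟩ := rep_spec hne hfix hL1
            have hq_pre : word φ L <+: (applyW φ)^[m] [a] :=
              (List.prefix_append _ _).trans hqm
            obtain ⟨t0, ht0⟩ := head_a hfix hq_pre hq_ne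
            have hlow : (φ a).length ≤ p.length := by
              rw [hw, ht0,
                show applyW φ (a :: t0) = φ a ++ applyW φ t0 from List.flatMap_cons]
              simp only [List.append_assoc, List.length_append]
              omega
            omega
    ------------------------------------------------------------------
    -- Case B : |p| ≥ |φ a|
    ------------------------------------------------------------------
    · push_neg at hcase
      have hplen := X_length hfix hk p.length
      have hpm : p <+: (applyW φ)^[p.length] [a] :=
        prefix_of_X hfix hpre (List.prefix_refl _) hplen.le
      -- greatest j with |φ(take j)| ≤ |p|
      set P : ℕ → Prop := fun j =>
        (applyW φ (((applyW φ)^[p.length] [a]).take j)).length ≤ p.length with hP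
      obtain ⟨rest, hrest⟩ := X_head hfix p.length
      have hP1 : P 1 := by
        show (applyW φ (((applyW φ)^[p.length] [a]).take 1)).length ≤ p.length
        rw [hrest, List.take_succ_cons, List.take_zero, applyW_singleton]
        exact hcase
      have hm1 : 1 ≤ p.length := by
        have : 0 < (φ a).length := List.length_pos_iff.mpr (hne a)
        omega
      have hj1 : 1 ≤ Nat.findGreatest P p.length := Nat.le_findGreatest hm1 hP1
      set j := Nat.findGreatest P p.length with hj
      have hjm' : j ≤ p.length := Nat.findGreatest_le p.length
      have hPj : P j := Nat.findGreatest_spec hm1 hP1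
      have hjX : j < ((applyW φ)^[p.length] [a]).length := lt_of_le_of_lt hjm' hplen
      set q := ((applyW φ)^[p.length] [a]).take j with hqdef
      have hq_len_eq : q.length = j := by
        rw [hqdef, List.length_take]
        omega
      have hq_ne : q ≠ [] := by
        intro h
        rw [h] at hq_len_eq
        simp at hq_len_eq
        omega
      have hq_pre : q <+: (applyW φ)^[p.length] [a] := List.take_prefix _ _
      obtain ⟨t0, ht0⟩ := head_a hfix hq_pre hq_ne
      have hφq_gt : q.length < (applyW φ q).length := applyW_gt hne hfix hu ht0
      have hφq_le : (applyW φ q).length ≤ p.length := hPj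
      have hjlt : j < p.length := by rw [← hq_len_eq]; omega
      have hPj1 : ¬ P (j + 1) :=
        Nat.findGreatest_is_greatest (n := p.length) (k := j + 1)
          (by rw [← hj]; omega) (by omega)
      have hqlenX : q.length < ((applyW φ)^[p.length] [a]).length := by
        rw [hq_len_eq]; exact hjX
      set b := ((applyW φ)^[p.length] [a])[q.length]'hqlenX with hb
      have hqb : q ++ [b] <+: (applyW φ)^[p.length] [a] := prefix_snoc hq_pre hqlenX
      have hqb_take : q ++ [b] = ((applyW φ)^[p.length] [a]).take (j + 1) := by
        have h1 : ((applyW φ)^[p.length] [a]).take (q.length + 1)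
            = ((applyW φ)^[p.length] [a]).take q.length ++ [b] := by
          rw [List.take_succ, List.getElem?_eq_getElem hqlenX]
          rfl
        rw [hq_len_eq] at h1
        rw [h1, ← hqdef]
      have hbig : p.length < (applyW φ q).length + (φ b).length := by
        have h2 : ¬ ((applyW φ (((applyW φ)^[p.length] [a]).take (j+1))).length ≤ p.length) :=
          hPj1
        rw [← hqb_take, applyW_append, applyW_singleton, List.length_append] at h2
        omega
      have hXsucc : applyW φ ((applyW φ)^[p.length] [a]) = (applyW φ)^[p.length + 1] [a] :=
        (Function.iterate_succ_apply' _ _ _).symm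
      have hφq_X : applyW φ q <+: (applyW φ)^[p.length + 1] [a] := by
        rw [← hXsucc]
        exact applyW_prefix φ hq_pre
      have hp_X : p <+: (applyW φ)^[p.length + 1] [a] :=
        hpm.trans (X_mono hfix (Nat.le_succ _))
      have hφq_p : applyW φ q <+: p := List.prefix_of_prefix_length_le hφq_X hp_X hφq_le
      obtain ⟨r, hr⟩ := hφq_p
      have hr_len : r.length < (φ b).length := by
        have h4 := congrArg List.length hr
        rw [List.length_append] at h4
        omega
      have hr_pre : r <+: φ b := by
        have hXM_split : applyW φ ((applyW φ)^[p.length] [a])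
            = applyW φ q ++ (φ b ++ applyW φ (((applyW φ)^[p.length] [a]).drop (j+1))) := by
          conv_lhs => rw [← List.take_append_drop (j+1) ((applyW φ)^[p.length] [a])]
          rw [applyW_append, ← hqb_take, applyW_append, applyW_singleton, List.append_assoc]
        have h3 : applyW φ q ++ r <+: applyW φ q
            ++ (φ b ++ applyW φ (((applyW φ)^[p.length] [a]).drop (j+1))) := by
          rw [hr, ← hXM_split, hXsucc]
          exact hp_X
        rw [List.prefix_append_right_inj] at h3
        have h4 : r = (φ b ++ applyW φ (((applyW φ)^[p.length] [a]).drop (j+1))).take r.length :=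
          List.prefix_iff_eq_take.mp h3
        rw [List.take_append_of_le_length hr_len.le] at h4
        rw [h4]
        exact List.take_prefix _ _
      have hsn : r ++ [(φ b)[r.length]'hr_len] <+: φ b := prefix_snoc hr_pre hr_len
      -- induction hypothesis applied to q
      have hq_lt : q.length < p.length := by omega
      obtain ⟨L, hL, hLuniq⟩ := ih q (by omega) hq_ne ⟨p.length, hq_pre⟩
      have hwordL : word φ L = q := ((dtrep_iff φ a q L).mp hL).2.2.symm
      obtain ⟨hl0, -, m', hq_snoc⟩ := rep_spec hne hfix hL
      have hlastb : (L.getLast hl0).2 = b := snoc_X_unique hfix hq_snoc hqb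
      refine ⟨L ++ [(r, (φ b)[r.length]'hr_len)], ?_, ?_⟩
      · show DTRep φ a p (L ++ [(r, (φ b)[r.length]'hr_len)])
        rw [dtrep_concat φ a p hl0 (r, (φ b)[r.length]'hr_len)]
        refine ⟨by rw [hwordL]; exact hL, ?_, ?_⟩
        · show r ++ [(φ b)[r.length]'hr_len] <+: φ (L.getLast hl0).2
          rw [hlastb]
          exact hsn
        · rw [hwordL]
          exact hr.symm
      · intro l' hl'
        rcases List.eq_nil_or_concat l' with rfl | ⟨L', y', rfl⟩
        · obtain ⟨⟨h, t, het, -, -⟩, -, -⟩ := hl'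
          simp at het
        · rw [List.concat_eq_append] at hl' ⊢
          rcases eq_or_ne L' [] with rfl | hL'
          · exfalso
            rw [show ([] : List (List (Fin n) × Fin n)) ++ [y'] = [y'] from rfl,
              dtrep_singleton] at hl'
            obtain ⟨-, h2, he⟩ := hl'
            have h3 := h2.length_le
            rw [List.length_append, ← he] at h3
            simp at h3
            omega
          · rw [dtrep_concat φ a p hL' y'] at hl'
            obtain ⟨hL1', hrel', hw'⟩ := hl'
            obtain ⟨hl0', hq_ne', m'', hq_snoc'⟩ := rep_spec hne hfix hL1'
            have hq'_pre : word φ L' <+: (applyW φ)^[m''] [a] :=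
              (List.prefix_append _ _).trans hq_snoc'
            have heq : applyW φ q ++ r = applyW φ (word φ L') ++ y'.1 := by
              rw [hr, hw']
            have hylen : y'.1.length < (φ (L'.getLast hl0').2).length := by
              have h5 := hrel'.length_le
              rw [List.length_append] at h5
              simp only [List.length_singleton] at h5
              omega
            have hqq' : q = word φ L' := by
              rcases lt_trichotomy q.length (word φ L').length with h | h | h
              · exact absurd (no_overlap hfix hqb hq'_pre h heq hr_len) not_false
              · exact (prefix_of_X hfix hq_pre hq'_pre h.le).eq_of_length h
              · exact absurd (no_overlap hfix hq_snoc' hq_pre h heq.symm hylen) not_false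
            have hry : r = y'.1 := by
              rw [hqq'] at heq
              exact List.append_cancel_left heq
            have hqb2 : word φ L' ++ [b] <+: (applyW φ)^[p.length] [a] := by
              rw [← hqq']
              exact hqb
            have hbb' : (L'.getLast hl0').2 = b := snoc_X_unique hfix hq_snoc' hqb2
            have hak' : y'.2 = (φ b)[r.length]'hr_len := by
              refine snoc_prefix_unique (s := r) ?_ hsn
              rw [hry]
              rw [hbb'] at hrel'
              exact hrel'
            have hLL : L' = L := hLuniq L' (by show DTRep φ a q L'; rw [hqq']; exact hL1')
            obtain ⟨y1, y2⟩ := y'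
            simp only at hry hak'
            rw [hLL, ← hry, hak']
end

section
/- In the Zeckendorf sequence automaton Z with states {A, B}, transitions δ(A,0)=A with weight 0, δ(A,1)=B with weight the Fibonacci sequence F (F₀=1, F₁=2, F_{n+2}=F_{n+1}+F_n), δ(B,0)=A with weight 0, initial state A, both states accepting: for every natural number n there is exactly one word in the language of Z without leading zeros whose weight value (π(A, w))₀ equals n, namely the Zeckendorf representation of n (no two consecutive 1s, most significant digit first). -/
/-- The Fibonacci sequence used in the Zeckendorf numeration:
`F₀ = 1, F₁ = 2, F_{n+2} = F_{n+1} + F_n`. -/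
def Fib : ℕ → ℤ
  | 0 => 1
  | 1 => 2
  | n + 2 => Fib (n + 1) + Fib n

/-- One step of the Zeckendorf sequence automaton `Z`, with states `{A = 0, B = 1}`:
`δ(A,0) = A` with weight `0`, `δ(A,1) = B` with weight `F`, `δ(B,0) = A` with
weight `0`, and `δ(B,1)` undefined. -/
def zStep : Option (Fin 2 × (ℕ → ℤ)) → Fin 2 → Option (Fin 2 × (ℕ → ℤ))
  | none, _ => none
  | some (q, s), a =>
      if a = 0 then some (0, shift s)
      else if q = 0 then some (1, shift s + Fib) else none

/-- Run of `Z` from the initial state `A`, computing the extended weight map. -/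
def zRun (w : List (Fin 2)) : Option (Fin 2 × (ℕ → ℤ)) :=
  w.foldl zStep (some ((0 : Fin 2), 0))

/-! ### Auxiliary development -/

open List Nat

lemma Fib_eq : ∀ m, Fib m = (Nat.fib (m+2) : ℤ)
  | 0 => by simp [Fib]
  | 1 => by norm_num [Fib, Nat.fib]
  | m+2 => by rw [Fib, Fib_eq (m+1), Fib_eq m]; push_cast [Nat.fib_add_two]; ring

/-- Value function on the reversed word (least significant digit first). -/
def rval : List (Fin 2) → ℕ → ℤ
  | [], _ => 0
  | a :: r, k => rval r (k+1) + (a.val : ℤ) * Fib k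

@[simp] lemma rval_nil (k : ℕ) : rval [] k = 0 := rfl
@[simp] lemma rval_cons (a : Fin 2) (r : List (Fin 2)) (k : ℕ) :
    rval (a :: r) k = rval r (k+1) + (a.val : ℤ) * Fib k := rfl

/-- The (decreasing) list of Zeckendorf indices of the `1`-digits of a word. -/
def idx : List (Fin 2) → List ℕ
  | [] => []
  | a :: t => if a = 1 then (t.length + 2) :: idx t else idx t

lemma idx_cons0 (t : List (Fin 2)) : idx ((0:Fin 2) :: t) = idx t := rfl
lemma idx_cons1 (t : List (Fin 2)) : idx ((1:Fin 2) :: t) = (t.length + 2) :: idx t := rfl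

lemma fin2 (a : Fin 2) : a = 0 ∨ a = 1 := by omega

lemma idx_le : ∀ w : List (Fin 2), ∀ x ∈ idx w, x ≤ w.length + 1 := by
  intro w
  induction w with
  | nil => simp [idx]
  | cons a t ih =>
    intro x hx
    simp only [idx] at hx
    split at hx
    · rcases List.mem_cons.1 hx with rfl | hx
      · simp
      · exact (ih x hx).trans (by simp)
    · exact (ih x hx).trans (by simp)

local instance : IsTrans ℕ fun a b ↦ b + 2 ≤ a where
  trans _a _b _c hba hcb := hcb.trans <| le_self_add.trans hba

lemma rep_tail {x : ℕ} {l : List ℕ} (h : (x :: l).IsZeckendorfRep) : l.IsZeckendorfRep :=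
  List.IsChain.tail h

lemma rep_head_rel {x : ℕ} {l : List ℕ} (h : (x :: l).IsZeckendorfRep) :
    ∀ y ∈ l, y + 2 ≤ x := by
  have h' : ((x :: l) ++ [0]).Pairwise (fun a b => b + 2 ≤ a) :=
    List.isChain_iff_pairwise.1 h
  rw [List.cons_append, List.pairwise_cons] at h'
  intro y hy
  exact h'.1 y (by simp [hy])

lemma rep_two_le {x : ℕ} {l : List ℕ} (h : (x :: l).IsZeckendorfRep) : 2 ≤ x := by
  have h' : ((x :: l) ++ [0]).Pairwise (fun a b => b + 2 ≤ a) :=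
    List.isChain_iff_pairwise.1 h
  rw [List.cons_append, List.pairwise_cons] at h'
  simpa using h'.1 0 (by simp)

lemma rval_append : ∀ (r : List (Fin 2)) (a : Fin 2) (k : ℕ),
    rval (r ++ [a]) k = rval r k + (a.val : ℤ) * Fib (r.length + k) := by
  intro r
  induction r with
  | nil => intro a k; simp [rval]
  | cons b r ih =>
    intro a k
    simp only [List.cons_append, rval_cons, ih, List.length_cons]
    have h : r.length + (k + 1) = r.length + 1 + k := by ring
    rw [h]
    ring

lemma rval_idx : ∀ w : List (Fin 2), rval w.reverse 0 = (((idx w).map Nat.fib).sum : ℤ) := by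
  intro w
  induction w with
  | nil => simp [rval, idx]
  | cons a t ih =>
    simp only [List.reverse_cons, rval_append, List.length_reverse, ih, idx]
    rcases fin2 a with rfl | rfl
    · simp
    · simp [Fib_eq, add_comm]

lemma zRun_eq : ∀ w : List (Fin 2), ¬ ([1, 1] <:+: w) →
    ∃ q : Fin 2, zRun w = some (q, fun k => rval w.reverse k) ∧
      (w.getLast? = some 1 ↔ q = 1) := by
  intro w
  induction w using List.reverseRecOn with
  | nil =>
    intro _
    refine ⟨0, ?_, by simp⟩
    have : (fun k => rval ([] : List (Fin 2)).reverse k) = (0 : ℕ → ℤ) := by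
      funext k; simp [rval]
    rw [this]; rfl
  | append_singleton u a ih =>
    intro h11
    have h11u : ¬ [1, 1] <:+: u := fun h => h11 (h.trans (u.prefix_append [a]).isInfix)
    obtain ⟨q, hq, hiff⟩ := ih h11u
    have hrun : zRun (u ++ [a]) = zStep (zRun u) a := by
      simp [zRun, List.foldl_append]
    rcases fin2 a with rfl | rfl
    · refine ⟨0, ?_, by simp⟩
      rw [hrun, hq]
      have hfun : shift (fun k => rval u.reverse k) = fun k => rval (u ++ [0]).reverse k := by
        funext k
        simp [shift, List.reverse_append, rval]
      simp only [zStep, hfun]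
      simp
    · have hq0 : q = 0 := by
        rcases fin2 q with rfl | rfl
        · rfl
        · exfalso
          have hl : u.getLast? = some 1 := hiff.2 rfl
          obtain ⟨u', rfl⟩ := List.getLast?_eq_some_iff.1 hl
          exact h11 ⟨u', [], by simp⟩
      subst hq0
      refine ⟨1, ?_, by simp⟩
      rw [hrun, hq]
      have : zStep (some ((0 : Fin 2), fun k => rval u.reverse k)) 1
          = some (1, shift (fun k => rval u.reverse k) + Fib) := by
        simp [zStep]
      rw [this]
      have hfun : (shift (fun k => rval u.reverse k) + Fib) = fun k => rval (u ++ [1]).reverse k := by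
        funext k
        simp [shift, List.reverse_append, rval, Pi.add_apply]
      rw [hfun]

lemma idx_rep : ∀ w : List (Fin 2), ¬ ([1,1] <:+: w) → (idx w).IsZeckendorfRep := by
  intro w
  induction w with
  | nil => simp [idx]
  | cons a t ih =>
    intro h11
    have h11t : ¬ [1,1] <:+: t := fun h => h11 (h.trans (t.suffix_cons a).isInfix)
    rcases fin2 a with rfl | rfl
    · simpa [idx] using ih h11t
    · rw [idx_cons1, List.IsZeckendorfRep, List.cons_append, List.isChain_cons]
      refine ⟨?_, ih h11t⟩
      intro y hy
      match t, h11t with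
      | [], _ => simp [idx] at hy; omega
      | (1 : Fin 2) :: t', _ => exact absurd ⟨[], t', by simp⟩ h11
      | (0 : Fin 2) :: t', h =>
        rw [idx_cons0] at hy
        cases h' : idx t' with
        | nil => rw [h'] at hy; simp at hy; omega
        | cons z l =>
          rw [h'] at hy
          simp only [List.cons_append, List.head?_cons, Option.mem_some_iff] at hy
          have hz := idx_le t' z (h' ▸ List.mem_cons_self (a := z) (l := l))
          simp only [List.length_cons]
          omega

lemma no11_of_rep : ∀ w : List (Fin 2), (idx w).IsZeckendorfRep → ¬ ([1,1] <:+: w) := by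
  intro w
  induction w with
  | nil => intro _ h; have := h.length_le; simp at this
  | cons a t ih =>
    intro hrep h
    rcases List.infix_cons_iff.1 h with hpre | hinf
    · obtain ⟨r, hr⟩ := hpre
      have ha : a = 1 := by
        have := congrArg (·.head?) hr; simpa using this.symm
      subst ha
      have ht : t = 1 :: r := by
        have := congrArg (·.tail) hr; simpa using this.symm
      subst ht
      rw [idx_cons1, idx_cons1] at hrep
      have := rep_head_rel hrep (r.length + 2) (by simp)
      simp at this
    · rcases fin2 a with rfl | rfl
      · exact ih (by rwa [idx_cons0] at hrep) hinf
      · exact ih (rep_tail (by rwa [idx_cons1] at hrep)) hinf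

lemma idx_inj_len : ∀ w1 w2 : List (Fin 2), w1.length = w2.length → idx w1 = idx w2 → w1 = w2 := by
  intro w1
  induction w1 with
  | nil => intro w2 h _; cases w2 <;> simp_all
  | cons a t1 ih =>
    intro w2 hlen hidx
    match w2 with
    | [] => simp at hlen
    | b :: t2 =>
      have hl : t1.length = t2.length := by simpa using hlen
      rcases fin2 a with rfl | rfl <;> rcases fin2 b with rfl | rfl
      · rw [idx_cons0, idx_cons0] at hidx
        rw [ih t2 hl hidx]
      · exfalso
        rw [idx_cons0, idx_cons1] at hidx
        have : t2.length + 2 ∈ idx t1 := by rw [hidx]; simp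
        have := idx_le t1 _ this
        omega
      · exfalso
        rw [idx_cons1, idx_cons0] at hidx
        have : t1.length + 2 ∈ idx t2 := by rw [← hidx]; simp
        have := idx_le t2 _ this
        omega
      · rw [idx_cons1, idx_cons1, hl, List.cons.injEq] at hidx
        rw [ih t2 hl hidx.2]

lemma idx_inj : ∀ w1 w2 : List (Fin 2), w1.head? ≠ some 0 → w2.head? ≠ some 0 →
    idx w1 = idx w2 → w1 = w2 := by
  intro w1 w2 h1 h2 hidx
  match w1, w2 with
  | [], [] => rfl
  | [], b :: t2 =>
    exfalso
    rcases fin2 b with rfl | rfl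
    · exact h2 rfl
    · rw [idx_cons1] at hidx; simp [idx] at hidx
  | a :: t1, [] =>
    exfalso
    rcases fin2 a with rfl | rfl
    · exact h1 rfl
    · rw [idx_cons1] at hidx; simp [idx] at hidx
  | a :: t1, b :: t2 =>
    rcases fin2 a with rfl | rfl
    · exact absurd rfl h1
    rcases fin2 b with rfl | rfl
    · exact absurd rfl h2
    rw [idx_cons1, idx_cons1, List.cons.injEq] at hidx
    have hlen : t1.length = t2.length := by omega
    exact idx_inj_len _ _ (by simp [hlen]) (by rw [idx_cons1, idx_cons1, hidx.2, hlen])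

def wordOfRep : ℕ → List ℕ → List (Fin 2)
  | 0, _ => []
  | m+1, l => (if m + 2 ∈ l then (1 : Fin 2) else 0) :: wordOfRep m l

lemma wordOfRep_length : ∀ m l, (wordOfRep m l).length = m := by
  intro m
  induction m with
  | zero => intro l; rfl
  | succ m ih => intro l; simp [wordOfRep, ih]

lemma wordOfRep_ignore : ∀ m (x : ℕ) (l : List ℕ), m + 1 < x →
    wordOfRep m (x :: l) = wordOfRep m l := by
  intro m
  induction m with
  | zero => intro x l _; rfl
  | succ m ih =>
    intro x l hx
    simp only [wordOfRep, ih x l (by omega)]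
    congr 2
    simp only [List.mem_cons, eq_iff_iff]
    constructor
    · rintro (h | h)
      · omega
      · exact h
    · intro h; exact Or.inr h

lemma idx_wordOfRep : ∀ m (l : List ℕ), l.IsZeckendorfRep → (∀ x ∈ l, x ≤ m + 1) →
    idx (wordOfRep m l) = l := by
  intro m
  induction m with
  | zero =>
    intro l hrep hle
    match l, hrep with
    | [], _ => rfl
    | x :: l', h => have := rep_two_le h; have := hle x (by simp); omega
  | succ m ih =>
    intro l hrep hle
    match l with
    | [] =>
      have hmem : (m + 2 ∉ ([] : List ℕ)) := by simp
      simp only [wordOfRep, if_neg hmem]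
      rw [idx_cons0, ih [] hrep (by simp)]
    | x :: l' =>
      by_cases hx : x = m + 2
      · subst hx
        have hmem : m + 2 ∈ (m+2) :: l' := by simp
        simp only [wordOfRep, if_pos hmem]
        rw [idx_cons1, wordOfRep_length]
        congr 1
        rw [wordOfRep_ignore m (m+2) l' (by omega)]
        exact ih l' (rep_tail hrep) (fun y hy => by have := rep_head_rel hrep y hy; omega)
      · have hmem : m + 2 ∉ x :: l' := by
          simp only [List.mem_cons]
          rintro (h | h)
          · exact hx h.symm
          · have := rep_head_rel hrep _ h
            have := hle x (by simp)
            omega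
        simp only [wordOfRep, if_neg hmem]
        rw [idx_cons0]
        exact ih (x :: l') hrep (fun y hy => by
          rcases List.mem_cons.1 hy with rfl | hy'
          · have := hle y (by simp); omega
          · have h1 := rep_head_rel hrep y hy'
            have := hle x (by simp); omega)

/-- The word associated to a Zeckendorf representation list. -/
def zword : List ℕ → List (Fin 2)
  | [] => []
  | x :: l => wordOfRep (x - 1) (x :: l)

lemma idx_zword {l : List ℕ} (h : l.IsZeckendorfRep) : idx (zword l) = l := by
  match l with
  | [] => rfl
  | x :: l' =>
    have hx := rep_two_le h
    refine idx_wordOfRep (x - 1) (x :: l') h ?_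
    intro y hy
    rcases List.mem_cons.1 hy with rfl | hy'
    · omega
    · have := rep_head_rel h y hy'
      omega

lemma zword_head {l : List ℕ} (h : l.IsZeckendorfRep) : (zword l).head? ≠ some 0 := by
  match l with
  | [] => simp [zword]
  | x :: l' =>
    have hx := rep_two_le h
    obtain ⟨m, rfl⟩ : ∃ m, x = m + 2 := ⟨x - 2, by omega⟩
    have hsub : m + 2 - 1 = m + 1 := by omega
    simp only [zword, hsub, wordOfRep]
    have hmem : m + 2 ∈ (m + 2) :: l' := by simp
    rw [if_pos hmem]
    simp

/-- Zeckendorf's theorem via the automaton `Z`: for every `n`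
there is exactly one word in the language of `Z` without leading zeros whose
weight value is `n`; it has no two consecutive `1`s. -/
theorem zeckendorf_unique_representation :
    ∀ n : ℕ, ∃! w : List (Fin 2),
      w.head? ≠ some 0 ∧ ¬ ([1, 1] <:+: w) ∧
      ∃ (q : Fin 2) (s : ℕ → ℤ), zRun w = some (q, s) ∧ s 0 = (n : ℤ) := by
  intro n
  set l := Nat.zeckendorf n with hl
  have hrep : l.IsZeckendorfRep := Nat.isZeckendorfRep_zeckendorf n
  set w := zword l with hw
  have hidxw : idx w = l := idx_zword hrep
  have hhead : w.head? ≠ some 0 := zword_head hrep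
  have h11 : ¬ ([1,1] <:+: w) := no11_of_rep w (hidxw ▸ hrep)
  obtain ⟨q, hq, -⟩ := zRun_eq w h11
  refine ⟨w, ⟨hhead, h11, q, (fun k => rval w.reverse k), hq, ?_⟩, ?_⟩
  · show rval w.reverse 0 = (n : ℤ)
    rw [rval_idx, hidxw, hl, Nat.sum_zeckendorf_fib]
  · rintro w' ⟨hhead', h11', q', s', hrun', hs0'⟩
    obtain ⟨q0, hq0, -⟩ := zRun_eq w' h11'
    rw [hrun'] at hq0
    have hs' : s' = fun k => rval w'.reverse k := (Prod.mk.injEq _ _ _ _ ▸ Option.some.inj hq0).2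
    have hsum : (((idx w').map Nat.fib).sum : ℤ) = (n : ℤ) := by
      rw [← rval_idx, ← hs0', hs']
    have hsum' : ((idx w').map Nat.fib).sum = n := by exact_mod_cast hsum
    have hzeck : idx w' = l := by
      rw [hl, ← hsum', Nat.zeckendorf_sum_fib (idx_rep w' h11')]
    exact idx_inj w' w hhead' hhead (by rw [hzeck, hidxw])
end
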